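/- arXiv:math/0504376 — 13 statements merged into one kernel-verified Lean document; each statement's English description precedes it below -/
import Mathlib

section
/- Let f : (A, m_A) → (B, m_B) be a local homomorphism of noetherian local rings inducing an isomorphism A/m_A ≅ B/m_B, with B complete. If x₁, …, xₙ generate m_B, then B = Σ_{a₁,…,aₙ ≥ 0} f(A)·x₁^{a₁}⋯xₙ^{aₙ} in the topological sense, i.e., every element of B is an (infinite, m_B-adically convergent) A-linear combination of monomials x₁^{a₁}⋯xₙ^{aₙ} in x₁,…,xₙ, so that B is topologically generated as an f(A)-module by the monomials in the xᵢ. -/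
open IsLocalRing

section Aux

variable {A B : Type*} [CommRing A] [CommRing B]

/-- The finite `A`-linear combination of monomials in `x` with coefficients `c`. -/
noncomputable def Smon (f : A →+* B) {n : ℕ} (x : Fin n → B) (c : (Fin n → ℕ) →₀ A) : B :=
  c.sum fun a r => f r * ∏ i, x i ^ a i

lemma Smon_add (f : A →+* B) {n : ℕ} (x : Fin n → B) (c₁ c₂ : (Fin n → ℕ) →₀ A) :
    Smon f x (c₁ + c₂) = Smon f x c₁ + Smon f x c₂ :=
  Finsupp.sum_add_index' (fun a => by simp) (fun a r s => by rw [map_add]; ring)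

lemma prod_pow_mem {n : ℕ} (x : Fin n → B) {I : Ideal B} (h : ∀ i, x i ∈ I)
    (s : Finset (Fin n)) (a : Fin n → ℕ) :
    ∏ i ∈ s, x i ^ a i ∈ I ^ (∑ i ∈ s, a i) := by
  classical
  induction s using Finset.induction with
  | empty => simp
  | @insert i s hi ih =>
    rw [Finset.prod_insert hi, Finset.sum_insert hi, pow_add]
    exact Ideal.mul_mem_mul (Ideal.pow_mem_pow (h i) _) ih

lemma Smon_mem (f : A →+* B) {n : ℕ} (x : Fin n → B) {I : Ideal B} (h : ∀ i, x i ∈ I)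
    {k : ℕ} (c : (Fin n → ℕ) →₀ A) (hc : ∀ a ∈ c.support, k ≤ ∑ i, a i) :
    Smon f x c ∈ I ^ k := by
  apply Submodule.sum_mem
  intro a ha
  exact Ideal.mul_mem_left _ _
    (Ideal.pow_le_pow_right (hc a ha) (prod_pow_mem x h Finset.univ a))

lemma single_prod {n : ℕ} (x : Fin n → B) (i : Fin n) :
    ∏ j, x j ^ (Pi.single i 1 : Fin n → ℕ) j = x i := by
  classical
  rw [Finset.prod_eq_single i]
  · simp
  · intro j _ hj
    simp [Pi.single_eq_of_ne hj]
  · simp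

lemma single_sum {n : ℕ} (i : Fin n) :
    ∑ j, (Pi.single i 1 : Fin n → ℕ) j = 1 := by
  classical
  simp [Pi.single_apply]

end Aux

/-- If `f : (A, m_A) → (B, m_B)` is a local homomorphism of noetherian local rings
inducing an isomorphism on residue fields, `B` is `m_B`-adically complete, and
`x₁, …, xₙ` generate `m_B`, then every element of `B` is, up to an arbitrarily high
power of `m_B`, a finite `f(A)`-linear combination of monomials in the `xᵢ`;
i.e. `B = Σ f(A)·x₁^{a₁}⋯xₙ^{aₙ}` (topologically, `B` is generated as an
`f(A)`-module by the monomials in the `xᵢ`). -/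
theorem local_complete_generated_by_monomials
    (A B : Type*) [CommRing A] [IsLocalRing A] [IsNoetherianRing A]
    [CommRing B] [IsLocalRing B] [IsNoetherianRing B]
    (f : A →+* B) [IsLocalHom f]
    (hres : Function.Bijective (IsLocalRing.ResidueField.map f))
    [IsAdicComplete (IsLocalRing.maximalIdeal B) B]
    (n : ℕ) (x : Fin n → B)
    (hx : Ideal.span (Set.range x) = IsLocalRing.maximalIdeal B) :
    ∀ b : B, ∀ k : ℕ, ∃ c : (Fin n → ℕ) →₀ A,
      b - (c.sum fun a r => f r * ∏ i, x i ^ a i) ∈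
        (IsLocalRing.maximalIdeal B) ^ k := by
  classical
  set I := IsLocalRing.maximalIdeal B with hI
  have hxI : ∀ i, x i ∈ I := fun i => hx ▸ Ideal.subset_span ⟨i, rfl⟩
  -- Every element of B is f(a) plus an element of the maximal ideal
  have hsub : ∀ t : B, ∃ a : A, t - f a ∈ I := by
    intro t
    obtain ⟨z, hz⟩ := hres.2 (IsLocalRing.residue B t)
    obtain ⟨a, rfl⟩ := IsLocalRing.residue_surjective (R := A) z
    rw [IsLocalRing.ResidueField.map_residue] at hz
    exact ⟨a, (Ideal.Quotient.eq (I := I)).mp hz.symm⟩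
  -- key lemma
  have key : ∀ k : ℕ, ∀ y ∈ I ^ k, ∃ c : (Fin n → ℕ) →₀ A,
      (∀ a ∈ c.support, k ≤ ∑ i, a i) ∧ y - Smon f x c ∈ I ^ (k + 1) := by
    intro k
    induction k with
    | zero =>
      intro y _
      obtain ⟨a, ha⟩ := hsub y
      refine ⟨Finsupp.single 0 a, fun _ _ => Nat.zero_le _, ?_⟩
      rw [Smon, Finsupp.sum_single_index (by simp)]
      simpa using ha
    | succ k ih =>
      have helper : ∀ c : (Fin n → ℕ) →₀ A, (∀ a ∈ c.support, k ≤ ∑ i, a i) →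
          ∀ q ∈ I, ∃ c' : (Fin n → ℕ) →₀ A,
            (∀ a ∈ c'.support, k + 1 ≤ ∑ i, a i) ∧
            q * Smon f x c - Smon f x c' ∈ I ^ (k + 2) := by
        intro c hc q hq
        rw [← hx] at hq
        induction hq using Submodule.span_induction with
        | mem q hqmem =>
          obtain ⟨i, rfl⟩ := hqmem
          refine ⟨c.mapDomain (· + Pi.single i 1), ?_, ?_⟩
          · intro a ha
            have := Finsupp.mapDomain_support ha
            obtain ⟨a₀, ha₀, rfl⟩ := Finset.mem_image.mp this
            have : ∑ j, (a₀ + Pi.single i 1 : Fin n → ℕ) j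
                = (∑ j, a₀ j) + 1 := by
              simp only [Pi.add_apply, Finset.sum_add_distrib, single_sum]
            rw [this]
            exact Nat.add_le_add_right (hc a₀ ha₀) 1
          · have hS : Smon f x (c.mapDomain (· + Pi.single i 1)) = x i * Smon f x c := by
              rw [Smon, Finsupp.sum_mapDomain_index (by intro b; simp)
                (by intro b m₁ m₂; rw [map_add]; ring)]
              rw [Smon, Finsupp.mul_sum]
              apply Finsupp.sum_congr
              intro a _
              have : ∏ j, x j ^ (a + Pi.single i 1 : Fin n → ℕ) j
                  = (∏ j, x j ^ a j) * x i := by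
                simp only [Pi.add_apply, pow_add, Finset.prod_mul_distrib]
                rw [single_prod]
              rw [this]; ring
            rw [hS, sub_self]
            exact zero_mem _
        | zero =>
          refine ⟨0, by simp, ?_⟩
          simp [Smon]
        | add q₁ q₂ h₁ h₂ ih₁ ih₂ =>
          obtain ⟨c₁, hc₁, he₁⟩ := ih₁
          obtain ⟨c₂, hc₂, he₂⟩ := ih₂
          refine ⟨c₁ + c₂, ?_, ?_⟩
          · intro a ha
            rcases Finset.mem_union.mp (Finsupp.support_add ha) with h | h
            · exact hc₁ a h
            · exact hc₂ a h
          · rw [Smon_add]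
            have : (q₁ + q₂) * Smon f x c - (Smon f x c₁ + Smon f x c₂)
                = (q₁ * Smon f x c - Smon f x c₁) + (q₂ * Smon f x c - Smon f x c₂) := by
              ring
            rw [this]
            exact add_mem he₁ he₂
        | smul t q hq ihq =>
          obtain ⟨c', hc', he⟩ := ihq
          obtain ⟨s, hs⟩ := hsub t
          refine ⟨c'.mapRange (s * ·) (mul_zero s), ?_, ?_⟩
          · intro a ha
            exact hc' a (Finsupp.support_mapRange ha)
          · have hS : Smon f x (c'.mapRange (s * ·) (mul_zero s)) = f s * Smon f x c' := by
              rw [Smon, Finsupp.sum_mapRange_index (by intro a; simp)]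
              rw [Smon, Finsupp.mul_sum]
              apply Finsupp.sum_congr
              intro a _
              rw [map_mul]; ring
            rw [hS]
            have heq : t • q * Smon f x c - f s * Smon f x c'
                = t * (q * Smon f x c - Smon f x c') + (t - f s) * Smon f x c' := by
              rw [smul_eq_mul]; ring
            rw [heq]
            refine add_mem (Ideal.mul_mem_left _ _ he) ?_
            have h2 : (t - f s) * Smon f x c' ∈ I * I ^ (k + 1) :=
              Ideal.mul_mem_mul hs (Smon_mem f x hxI c' hc')
            rwa [← pow_succ'] at h2
      intro y hy
      rw [pow_succ] at hy
      refine Submodule.mul_induction_on hy ?_ ?_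
      · intro p hp q hq
        obtain ⟨c, hc, he⟩ := ih p hp
        obtain ⟨c', hc', he'⟩ := helper c hc q hq
        refine ⟨c', hc', ?_⟩
        have heq : p * q - Smon f x c' = (q * Smon f x c - Smon f x c') + q * (p - Smon f x c) := by
          ring
        rw [heq]
        refine add_mem he' ?_
        have h2 : q * (p - Smon f x c) ∈ I * I ^ (k + 1) := Ideal.mul_mem_mul hq he
        rwa [← pow_succ'] at h2
      · intro y₁ y₂ ih₁ ih₂
        obtain ⟨c₁, hc₁, he₁⟩ := ih₁
        obtain ⟨c₂, hc₂, he₂⟩ := ih₂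
        refine ⟨c₁ + c₂, ?_, ?_⟩
        · intro a ha
          rcases Finset.mem_union.mp (Finsupp.support_add ha) with h | h
          · exact hc₁ a h
          · exact hc₂ a h
        · rw [Smon_add]
          have : y₁ + y₂ - (Smon f x c₁ + Smon f x c₂)
              = (y₁ - Smon f x c₁) + (y₂ - Smon f x c₂) := by ring
          rw [this]
          exact add_mem he₁ he₂
  -- main induction
  intro b k
  induction k with
  | zero => exact ⟨0, by simp⟩
  | succ k ihk =>
    obtain ⟨c, hcmem⟩ := ihk
    obtain ⟨c', _, hc'⟩ := key k _ hcmem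
    refine ⟨c + c', ?_⟩
    show b - Smon f x (c + c') ∈ I ^ (k + 1)
    rw [Smon_add]
    have : b - (Smon f x c + Smon f x c') = (b - Smon f x c) - Smon f x c' := by ring
    rw [this]
    exact hc'
end

section
/- Let (A, m) be a complete noetherian local ring, n ≥ 1, T ∈ ℕⁿ nonzero, and G ∈ m⟦X₁,…,Xₙ⟧ (a power series with all coefficients in m). Let R = A⟦X₁,…,Xₙ⟧/(X^T − G) and M = { Σ_{I : T ≰ I} a_I X^I } the A-submodule of power series supported on exponents I with T ≰ I. Then the restriction of the quotient map π : A⟦X₁,…,Xₙ⟧ → R to M is bijective. -/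
/-!
Write `f = X^T - G`. If the coefficients of `f * Q` vanish at all exponents `≥ T`, then comparing
coefficients at `I + T` gives `coeff I Q = coeff (I + T) (G * Q)`; as `G` has coefficients in `m`,
induction puts every coefficient of `Q` in every power of `m`, so `Q = 0` by separatedness.
For existence, let `F / X^T` be the quotient of `F` by `X^T` that discards the terms not
divisible by `X^T`. The step `F ↦ F - f * (F / X^T)` replaces the part of `F` above `T` by
`G * (F / X^T)`, so along its iterates the quotients `F / X^T` gain a factor of `m` at each step;
their sums converge `m`-adically to some `Q`, and then `F - f * Q` has no terms above `T`.
-/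

open MvPowerSeries

namespace MvPowerSeries

variable {σ A : Type*} [CommRing A]

theorem coeff_mul_mem_ideal_mul_ideal_of_coeff_mem_ideal {I J : Ideal A}
    {f g : MvPowerSeries σ A} (hf : ∀ d, coeff d f ∈ I) (hg : ∀ d, coeff d g ∈ J)
    (d : σ →₀ ℕ) : coeff d (f * g) ∈ I * J := by
  classical
  rw [coeff_mul]
  exact Ideal.sum_mem _ fun p _ => Ideal.mul_mem_mul (hf p.1) (hg p.2)

theorem coeff_mul_mem_ideal_of_coeff_right_mem_ideal {I : Ideal A} (f : MvPowerSeries σ A)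
    {g : MvPowerSeries σ A} (hg : ∀ d, coeff d g ∈ I) (d : σ →₀ ℕ) : coeff d (f * g) ∈ I := by
  classical
  rw [coeff_mul]
  exact Ideal.sum_mem _ fun p _ => I.mul_mem_left _ (hg p.2)

theorem prod_X_pow_eq_monomial [Fintype σ] (T : σ → ℕ) :
    ∏ i, (X i : MvPowerSeries σ A) ^ T i = monomial (Finsupp.equivFunOnFinite.symm T) 1 := by
  rw [monomial_one_eq, Finsupp.prod_fintype _ _ fun _ => pow_zero _]
  rfl

noncomputable def divMonomial (e : σ →₀ ℕ) : MvPowerSeries σ A →ₗ[A] MvPowerSeries σ A where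
  toFun F d := coeff (d + e) F
  map_add' _ _ := rfl
  map_smul' _ _ := rfl

theorem coeff_divMonomial (e d : σ →₀ ℕ) (F : MvPowerSeries σ A) :
    coeff d (divMonomial e F) = coeff (d + e) F := rfl

theorem divMonomial_monomial_one_mul (e : σ →₀ ℕ) (F : MvPowerSeries σ A) :
    divMonomial e (monomial e 1 * F) = F := by
  ext d
  rw [coeff_divMonomial, add_comm, coeff_add_monomial_mul, one_mul]

theorem coeff_eq_coeff_divMonomial {e d : σ →₀ ℕ} (h : e ≤ d) (F : MvPowerSeries σ A) :
    coeff d F = coeff (d - e) (divMonomial e F) := by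
  rw [coeff_divMonomial, tsub_add_cancel_of_le h]

section Adic

variable {𝔪 : Ideal A}

theorem _root_.IsHausdorff.eq_zero_of_forall_mem_pow [IsHausdorff 𝔪 A] {a : A}
    (h : ∀ k, a ∈ 𝔪 ^ k) : a = 0 :=
  IsHausdorff.haus' (I := 𝔪) a fun k => by
    rw [SModEq.zero, smul_eq_mul, Ideal.mul_top]
    exact h k

theorem _root_.IsPrecomplete.exists_sub_mem_pow [IsPrecomplete 𝔪 A] (a : ℕ → A)
    (h : ∀ k, a (k + 1) - a k ∈ 𝔪 ^ k) : ∃ L, ∀ k, a k - L ∈ 𝔪 ^ k := by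
  have cauchy {k l : ℕ} (hkl : k ≤ l) : a k ≡ a l [SMOD (𝔪 ^ k • ⊤ : Submodule A A)] := by
    induction l, hkl using Nat.le_induction with
    | base => rfl
    | succ l hkl ih =>
      refine ih.trans (SModEq.symm ?_)
      rw [SModEq.sub_mem, smul_eq_mul, Ideal.mul_top]
      exact Ideal.pow_le_pow_right hkl (h l)
  obtain ⟨L, hL⟩ := IsPrecomplete.prec' (I := 𝔪) a cauchy
  refine ⟨L, fun k => ?_⟩
  simpa [SModEq.sub_mem] using hL k

theorem exists_coeff_sub_mem_pow [IsPrecomplete 𝔪 A] (Φ : ℕ → MvPowerSeries σ A)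
    (h : ∀ k d, coeff d (Φ (k + 1) - Φ k) ∈ 𝔪 ^ k) :
    ∃ F : MvPowerSeries σ A, ∀ k d, coeff d (Φ k - F) ∈ 𝔪 ^ k := by
  choose L hL using fun d => IsPrecomplete.exists_sub_mem_pow (𝔪 := 𝔪) (fun k => coeff d (Φ k))
    fun k => by simpa only [map_sub] using h k d
  let F : MvPowerSeries σ A := L
  exact ⟨F, fun k d => by rw [map_sub]; exact hL d k⟩

theorem eq_zero_of_coeff_monomial_sub_mul_eq_zero [IsHausdorff 𝔪 A] {e : σ →₀ ℕ}
    {G Q : MvPowerSeries σ A} (hG : ∀ d, coeff d G ∈ 𝔪)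
    (hQ : ∀ d, e ≤ d → coeff d ((monomial e 1 - G) * Q) = 0) : Q = 0 := by
  have coeff_eq (d : σ →₀ ℕ) : coeff d Q = coeff (e + d) (G * Q) := by
    have := hQ (e + d) le_self_add
    rwa [sub_mul, map_sub, coeff_add_monomial_mul, one_mul, sub_eq_zero] at this
  have coeff_mem_pow (k : ℕ) : ∀ d, coeff d Q ∈ 𝔪 ^ k := by
    induction k with
    | zero => simp
    | succ k ih =>
      intro d
      rw [coeff_eq, pow_succ']
      exact coeff_mul_mem_ideal_mul_ideal_of_coeff_mem_ideal hG ih _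
  ext d
  exact IsHausdorff.eq_zero_of_forall_mem_pow fun k => coeff_mem_pow k d

theorem exists_coeff_sub_monomial_sub_mul_eq_zero [IsAdicComplete 𝔪 A] {e : σ →₀ ℕ}
    {G : MvPowerSeries σ A} (hG : ∀ d, coeff d G ∈ 𝔪) (F : MvPowerSeries σ A) :
    ∃ Q, ∀ d, e ≤ d → coeff d (F - (monomial e 1 - G) * Q) = 0 := by
  set f := monomial e 1 - G
  let step (H : MvPowerSeries σ A) : MvPowerSeries σ A := H - f * divMonomial e H
  have divMonomial_step (H : MvPowerSeries σ A) :
      divMonomial e (step H) = divMonomial e (G * divMonomial e H) := by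
    simp only [step, f, sub_mul, map_sub, divMonomial_monomial_one_mul, sub_sub_cancel]
  let seq (k : ℕ) := step^[k] F
  let quot (k : ℕ) := divMonomial e (seq k)
  have coeff_quot_mem (k : ℕ) : ∀ d, coeff d (quot k) ∈ 𝔪 ^ k := by
    induction k with
    | zero => simp
    | succ k ih =>
      intro d
      rw [show quot (k + 1) = divMonomial e (G * quot k) from
        (congrArg _ (Function.iterate_succ_apply' step k F)).trans (divMonomial_step _), pow_succ']
      exact coeff_mul_mem_ideal_mul_ideal_of_coeff_mem_ideal hG ih _
  let partialQ (k : ℕ) := ∑ j ∈ Finset.range k, quot j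
  have seq_eq (k : ℕ) : seq k = F - f * partialQ k := by
    induction k with
    | zero => simp [seq, partialQ]
    | succ k ih =>
      rw [show seq (k + 1) = seq k - f * quot k from Function.iterate_succ_apply' step k F,
        show partialQ (k + 1) = partialQ k + quot k from Finset.sum_range_succ _ _, ih]
      ring
  obtain ⟨Q, hQ⟩ := exists_coeff_sub_mem_pow (𝔪 := 𝔪) partialQ fun k d => by
    simpa [partialQ, Finset.sum_range_succ] using coeff_quot_mem k d
  refine ⟨Q, fun d hd => IsHausdorff.eq_zero_of_forall_mem_pow (𝔪 := 𝔪) fun k => ?_⟩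
  rw [show F - f * Q = seq k + f * (partialQ k - Q) by rw [seq_eq]; ring, map_add,
    coeff_eq_coeff_divMonomial hd]
  exact add_mem (coeff_quot_mem k _) (coeff_mul_mem_ideal_of_coeff_right_mem_ideal f (hQ k) d)

end Adic

end MvPowerSeries

theorem powerSeries_quotient_basis_general
    (A : Type*) [CommRing A] [IsLocalRing A]
    [IsAdicComplete (IsLocalRing.maximalIdeal A) A]
    (n : ℕ) (T : Fin n → ℕ)
    (G : MvPowerSeries (Fin n) A)
    (hG : ∀ I : Fin n →₀ ℕ, coeff I G ∈ IsLocalRing.maximalIdeal A) :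
    Set.BijOn
      (Ideal.Quotient.mk (Ideal.span {(∏ i, (X i : MvPowerSeries (Fin n) A) ^ T i) - G}))
      {F : MvPowerSeries (Fin n) A | ∀ I : Fin n →₀ ℕ, (∀ i, T i ≤ I i) → coeff I F = 0}
      Set.univ := by
  set e := Finsupp.equivFunOnFinite.symm T
  have le_iff (I : Fin n →₀ ℕ) : (∀ i, T i ≤ I i) ↔ e ≤ I := by simp [e, Finsupp.le_def]
  rw [prod_X_pow_eq_monomial]
  refine ⟨Set.mapsTo_univ _ _, fun F₁ h₁ F₂ h₂ h => ?_, fun y _ => ?_⟩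
  · obtain ⟨Q, hQ⟩ := Ideal.mem_span_singleton'.mp (Ideal.Quotient.eq.mp h)
    have hQ0 : Q = 0 := eq_zero_of_coeff_monomial_sub_mul_eq_zero hG fun d hd => by
      rw [mul_comm, hQ, map_sub, h₁ d ((le_iff d).2 hd), h₂ d ((le_iff d).2 hd), sub_self]
    rwa [hQ0, zero_mul, eq_comm, sub_eq_zero] at hQ
  · obtain ⟨F, rfl⟩ := Ideal.Quotient.mk_surjective y
    obtain ⟨Q, hQ⟩ := exists_coeff_sub_monomial_sub_mul_eq_zero hG F
    refine ⟨_, fun d hd => hQ d ((le_iff d).1 hd), Ideal.Quotient.eq.mpr ?_⟩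
    exact Ideal.mem_span_singleton'.mpr ⟨-Q, by ring⟩

/-- Let `(A, m)` be a complete noetherian local ring, `T ∈ ℕⁿ` nonzero, and
`G ∈ m⟦X₁,…,Xₙ⟧`.  Let `R = A⟦X₁,…,Xₙ⟧/(X^T − G)` and let `M` be the `A`-submodule of
power series supported on exponents `I` with `T ≰ I`.  Then the restriction to `M` of
the quotient map `π : A⟦X₁,…,Xₙ⟧ → R` is bijective. -/
theorem powerSeries_quotient_basis
    (A : Type*) [CommRing A] [IsLocalRing A] [IsNoetherianRing A]
    [IsAdicComplete (IsLocalRing.maximalIdeal A) A]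
    (n : ℕ) (hn : 1 ≤ n) (T : Fin n → ℕ) (hT : T ≠ 0)
    (G : MvPowerSeries (Fin n) A)
    (hG : ∀ I : Fin n →₀ ℕ, coeff I G ∈ IsLocalRing.maximalIdeal A) :
    Set.BijOn
      (Ideal.Quotient.mk (Ideal.span {(∏ i, (X i : MvPowerSeries (Fin n) A) ^ T i) - G}))
      {F : MvPowerSeries (Fin n) A | ∀ I : Fin n →₀ ℕ, (∀ i, T i ≤ I i) → coeff I F = 0}
      Set.univ :=
  powerSeries_quotient_basis_general A n T G hG
end

section
/- Let (A, m) be a noetherian local ring, T ∈ ℕⁿ nonzero, and G a power series over A with all coefficients in m. Then A⟦X₁,…,Xₙ⟧/(X^T − G) is flat as an A-module. -/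
/-!
Over a noetherian ring `A`, the power series ring `A⟦X⟧ = A^(ℕⁿ)` is flat by the equational
criterion, since the module of relations among finitely many elements of `A` is finitely
generated. Flatness passes to `A⟦X⟧ ⧸ (f)` as soon as `f` is a nonzerodivisor on
`A⟦X⟧ ⧸ I • A⟦X⟧ = (A ⧸ I)⟦X⟧` for every finitely generated ideal `I`. For `f = X^T - G` this
holds: if all coefficients of `(X^T - G) c` lie in `I`, comparing coefficients at `T + d` gives
`c_d ≡ (G c)_{T + d} mod I`, so by induction the coefficients of `c` lie in `I ⊔ m ^ k` for
every `k`, hence in `I` by Krull's intersection theorem.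
-/

open MvPowerSeries

section

variable {R : Type*} [CommRing R]

theorem Module.Flat.pi_of_isNoetherianRing [IsNoetherianRing R] (ι : Type*) :
    Module.Flat R (ι → R) := by
  refine Module.Flat.of_forall_isTrivialRelation fun {l f x} hfx => ?_
  let φ : (Fin l → R) →ₗ[R] R := Fintype.linearCombination R f
  obtain ⟨k, y, hy⟩ :=
    Submodule.fg_iff_exists_fin_generating_family.mp (IsNoetherian.noetherian (LinearMap.ker φ))
  have hmem (j : ι) : (fun i => x i j) ∈ Submodule.span R (Set.range y) := by
    rw [hy, LinearMap.mem_ker]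
    simpa [φ, Fintype.linearCombination_apply, mul_comm] using congr_fun hfx j
  choose c hc using fun j => (Submodule.mem_span_range_iff_exists_fun R).mp (hmem j)
  refine ⟨k, fun i m => y m i, fun m j => c j m, fun i => funext fun j => ?_, fun m => ?_⟩
  · simpa [mul_comm] using (congr_fun (hc j) i).symm
  · have : y m ∈ LinearMap.ker φ := hy ▸ Submodule.subset_span ⟨m, rfl⟩
    simpa [φ, Fintype.linearCombination_apply, mul_comm] using this

theorem Submodule.mem_ideal_span_range_smul_top_iff {M : Type*} [AddCommGroup M] [Module R M]
    {ι : Type*} [Fintype ι] (r : ι → R) (c : M) :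
    c ∈ Ideal.span (Set.range r) • (⊤ : Submodule R M) ↔ ∃ c' : ι → M, ∑ i, r i • c' i = c := by
  refine ⟨fun h => ?_, ?_⟩
  · refine Submodule.smul_induction_on h (fun a ha m _ => ?_) ?_
    · obtain ⟨b, rfl⟩ := Ideal.mem_span_range_iff_exists_fun.mp ha
      exact ⟨fun i => b i • m, by simp [Finset.sum_smul, smul_smul, mul_comm]⟩
    · rintro _ _ ⟨c₁, rfl⟩ ⟨c₂, rfl⟩
      exact ⟨c₁ + c₂, by simp [smul_add, Finset.sum_add_distrib]⟩
  · rintro ⟨c', rfl⟩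
    exact Submodule.sum_mem _ fun i _ =>
      Submodule.smul_mem_smul (Ideal.subset_span ⟨i, rfl⟩) Submodule.mem_top

theorem Submodule.mem_ideal_smul_top_pi_iff {I : Ideal R} (hI : I.FG) {ι : Type*} (v : ι → R) :
    v ∈ I • (⊤ : Submodule R (ι → R)) ↔ ∀ i, v i ∈ I := by
  obtain ⟨l, r, rfl⟩ := Submodule.fg_iff_exists_fin_generating_family.mp hI
  rw [← Ideal.span, mem_ideal_span_range_smul_top_iff]
  constructor
  · rintro ⟨c, rfl⟩ i
    simp only [Finset.sum_apply, Pi.smul_apply, smul_eq_mul]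
    exact Ideal.mem_span_range_iff_exists_fun.mpr ⟨fun j => c j i, by simp [mul_comm]⟩
  · intro h
    choose a ha using fun i => Ideal.mem_span_range_iff_exists_fun.mp (h i)
    exact ⟨fun j i => a i j, funext fun i => by simp [← ha i, mul_comm]⟩

theorem Module.Flat.quotient_span_singleton {B : Type*} [CommRing B] [Algebra R B]
    [Module.Flat R B] (f : B)
    (hf : ∀ I : Ideal R, I.FG → ∀ c : B,
      f * c ∈ I • (⊤ : Submodule R B) → c ∈ I • (⊤ : Submodule R B)) :
    Module.Flat R (B ⧸ Ideal.span {f}) := by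
  refine Module.Flat.of_forall_isTrivialRelation fun {l r x} hrx => ?_
  let π := (Ideal.Quotient.mkₐ R (Ideal.span {f})).toLinearMap
  choose x' hx' using fun i => Ideal.Quotient.mk_surjective (x i)
  have hspan : ∑ i, r i • x' i ∈ Ideal.span {f} := by
    rw [← Ideal.Quotient.eq_zero_iff_mem, ← hrx]
    change π _ = _
    simp [map_sum, π, ← hx']
  obtain ⟨c, hc⟩ := Ideal.mem_span_singleton'.mp hspan
  have hc_mem : c ∈ Ideal.span (Set.range r) • (⊤ : Submodule R B) := by
    refine hf _ (Submodule.fg_span (Set.finite_range r)) c ?_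
    rw [mul_comm, hc]
    exact (Submodule.mem_ideal_span_range_smul_top_iff r _).mpr ⟨x', rfl⟩
  obtain ⟨c', rfl⟩ := (Submodule.mem_ideal_span_range_smul_top_iff r c).mp hc_mem
  obtain ⟨k, a, y, hxy, hra⟩ :=
    Module.Flat.isTrivialRelation_of_sum_smul_eq_zero (f := r) (x := fun i => x' i - f * c' i)
      (by simp only [smul_sub, Finset.sum_sub_distrib, ← hc, mul_comm _ f, Finset.mul_sum,
        mul_smul_comm, sub_self])
  refine ⟨k, a, fun j => π (y j), fun i => ?_, hra⟩
  have : π (x' i - f * c' i) = x i := by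
    simp [π, ← hx' i]
  rw [← this, show x' i - f * c' i = _ from hxy i, map_sum]
  simp only [map_smul]

end

theorem Ideal.mem_of_forall_mem_sup_pow {A : Type*} [CommRing A] [IsNoetherianRing A]
    {I J : Ideal A} (hJ : J ≤ Ideal.jacobson ⊥) {a : A} (h : ∀ k : ℕ, a ∈ I ⊔ J ^ k) : a ∈ I := by
  rw [← Ideal.Quotient.eq_zero_iff_mem, ← Submodule.mem_bot A,
    ← J.iInf_pow_smul_eq_bot_of_le_jacobson (M := A ⧸ I) hJ, Submodule.mem_iInf]
  intro k
  obtain ⟨i, hi, j, hj, rfl⟩ := Submodule.mem_sup.mp (h k)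
  rw [map_add, Ideal.Quotient.eq_zero_iff_mem.mpr hi, zero_add, ← mul_one j, map_mul, map_one,
    ← Ideal.Quotient.algebraMap_eq, ← Algebra.smul_def]
  exact Submodule.smul_mem_smul hj Submodule.mem_top

theorem MvPowerSeries.coeff_mem_of_coeff_monomial_sub_mul_mem {A σ : Type*} [CommRing A]
    [IsNoetherianRing A] {I J : Ideal A} (hJ : J ≤ Ideal.jacobson ⊥) (e : σ →₀ ℕ)
    {G : MvPowerSeries σ A} (hG : ∀ d, coeff d G ∈ J) {c : MvPowerSeries σ A}
    (h : ∀ d, coeff d ((monomial e 1 - G) * c) ∈ I) (d : σ →₀ ℕ) : coeff d c ∈ I := by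
  classical
  refine Ideal.mem_of_forall_mem_sup_pow hJ fun k => ?_
  induction k generalizing d with
  | zero => simp [Ideal.one_eq_top]
  | succ k ih =>
    have hsplit : coeff d c = coeff (e + d) ((monomial e 1 - G) * c) + coeff (e + d) (G * c) := by
      rw [sub_mul, map_sub, coeff_add_monomial_mul, one_mul, sub_add_cancel]
    have hJmul : J * (I ⊔ J ^ k) ≤ I ⊔ J ^ (k + 1) := by
      rw [Ideal.mul_sup, pow_succ']
      exact sup_le_sup_right Ideal.mul_le_right _
    rw [hsplit, coeff_mul]
    exact Submodule.add_mem _ (Submodule.mem_sup_left (h _)) <| Submodule.sum_mem _ fun uv _ =>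
      hJmul (Ideal.mul_mem_mul (hG uv.1) (ih uv.2))

theorem MvPowerSeries.flat_quotient_span_monomial_sub {A σ : Type*} [CommRing A]
    [IsNoetherianRing A] {J : Ideal A} (hJ : J ≤ Ideal.jacobson ⊥) (e : σ →₀ ℕ)
    {G : MvPowerSeries σ A} (hG : ∀ d, coeff d G ∈ J) :
    Module.Flat A (MvPowerSeries σ A ⧸ Ideal.span {monomial e 1 - G}) := by
  have : Module.Flat A (MvPowerSeries σ A) := Module.Flat.pi_of_isNoetherianRing (σ →₀ ℕ)
  exact Module.Flat.quotient_span_singleton _ fun I hI c hc =>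
    (Submodule.mem_ideal_smul_top_pi_iff hI c).mpr <|
      coeff_mem_of_coeff_monomial_sub_mul_mem hJ e hG <|
        (Submodule.mem_ideal_smul_top_pi_iff hI _).mp hc

theorem powerSeries_quotient_flat_general
    (A : Type*) [CommRing A] [IsLocalRing A] [IsNoetherianRing A]
    (n : ℕ) (T : Fin n → ℕ)
    (G : MvPowerSeries (Fin n) A)
    (hG : ∀ I : Fin n →₀ ℕ, coeff I G ∈ IsLocalRing.maximalIdeal A) :
    Module.Flat A
      (MvPowerSeries (Fin n) A ⧸
        Ideal.span {(∏ i, (X i : MvPowerSeries (Fin n) A) ^ T i) - G}) := by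
  have hXT : (∏ i, (X i : MvPowerSeries (Fin n) A) ^ T i)
      = monomial (Finsupp.equivFunOnFinite.symm T) 1 := by
    rw [monomial_one_eq, Finsupp.prod_fintype _ _ fun _ => pow_zero _]
    rfl
  rw [hXT]
  exact flat_quotient_span_monomial_sub (IsLocalRing.maximalIdeal_le_jacobson _) _ hG

/-- Let `(A, m)` be a noetherian local ring, `T ∈ ℕⁿ` nonzero, and `G` a power series
over `A` all of whose coefficients lie in `m`.  Then `A⟦X₁,…,Xₙ⟧/(X^T − G)` is flat
as an `A`-module. -/
theorem powerSeries_quotient_flat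
    (A : Type*) [CommRing A] [IsLocalRing A] [IsNoetherianRing A]
    (n : ℕ) (hn : 1 ≤ n) (T : Fin n → ℕ) (hT : T ≠ 0)
    (G : MvPowerSeries (Fin n) A)
    (hG : ∀ I : Fin n →₀ ℕ, coeff I G ∈ IsLocalRing.maximalIdeal A) :
    Module.Flat A
      (MvPowerSeries (Fin n) A ⧸
        Ideal.span {(∏ i, (X i : MvPowerSeries (Fin n) A) ^ T i) - G}) :=
  powerSeries_quotient_flat_general A n T G hG
end

section
/- Let A be a commutative ring, n ≥ 1, T ∈ ℕⁿ nonzero, and a ∈ A. Then R = A[X₁,…,Xₙ]/(X^T − a) is flat over A. Indeed, the natural map from the A-module M = { Σ_{I : T ≰ I} a_I X^I } of polynomials supported on exponents I with T ≰ I to R is bijective, so R is a free A-module. -/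
/-!
Write `k(I)` for the largest `k` with `k • T ≤ I`. Since `X^T ≡ a` modulo `X^T - a`, every monomial
reduces to `X^I ≡ a^k(I) X^(I - k(I) • T)`, and the exponent on the right is no longer `≥ T`.
Extending this by `A`-linearity gives a normal-form map `ψ` onto the span `M` of the monomials
`X^I` with `T ≰ I`. It is the identity on `M`, and it kills every multiple of `X^T - a` because
`k(T + I) = k(I) + 1`. So `M → R` is bijective, and `R` is free on the monomials of `M`.
-/

namespace Finsupp

variable {σ : Type*} {T I : σ →₀ ℕ} {k : ℕ}

/-- The largest `k` with `k • T ≤ I` when `T ≠ 0` (for `T = 0` it is the junk value `I.degree`). -/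
noncomputable def fitCount (T I : σ →₀ ℕ) : ℕ :=
  Nat.findGreatest (fun k => k • T ≤ I) I.degree

theorem le_degree_of_nsmul_le (hT : T ≠ 0) (h : k • T ≤ I) : k ≤ I.degree := by
  have hdeg : 1 ≤ T.degree := Nat.one_le_iff_ne_zero.2 fun h => hT ((degree_eq_zero_iff T).1 h)
  calc k ≤ k • T.degree := Nat.le_mul_of_pos_right k hdeg
    _ = (k • T).degree := (map_nsmul degree k T).symm
    _ ≤ I.degree := degree_mono h

theorem fitCount_nsmul_le (T I : σ →₀ ℕ) : fitCount T I • T ≤ I :=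
  Nat.findGreatest_spec (P := fun k => k • T ≤ I) (Nat.zero_le _) (by simp)

theorem not_succ_fitCount_nsmul_le (hT : T ≠ 0) : ¬ (fitCount T I + 1) • T ≤ I := fun h =>
  Nat.findGreatest_is_greatest (Nat.lt_succ_self _) (le_degree_of_nsmul_le hT h) h

theorem fitCount_eq (hT : T ≠ 0) (hle : k • T ≤ I) (hlt : ¬ (k + 1) • T ≤ I) :
    fitCount T I = k := by
  refine Nat.findGreatest_eq_iff.2
    ⟨le_degree_of_nsmul_le hT hle, fun _ => hle, fun j hkj _ hj => hlt ?_⟩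
  exact ((nsmul_le_nsmul_left zero_le hkj).trans hj)

theorem fitCount_of_not_le (hT : T ≠ 0) (h : ¬ T ≤ I) : fitCount T I = 0 :=
  fitCount_eq hT (by simp) (by simpa using h)

theorem fitCount_add_self (hT : T ≠ 0) (I : σ →₀ ℕ) :
    fitCount T (T + I) = fitCount T I + 1 := by
  refine fitCount_eq hT ?_ ?_
  · rw [succ_nsmul', add_le_add_iff_left]
    exact fitCount_nsmul_le T I
  · rw [succ_nsmul' _ (fitCount T I + 1), add_le_add_iff_left]
    exact not_succ_fitCount_nsmul_le hT

theorem not_le_sub_fitCount_nsmul (hT : T ≠ 0) : ¬ T ≤ I - fitCount T I • T := by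
  rw [le_tsub_iff_right (fitCount_nsmul_le T I), ← succ_nsmul']
  exact not_succ_fitCount_nsmul_le hT

end Finsupp

theorem Module.Free.of_bijOn {R M N : Type*} [Semiring R] [AddCommMonoid M] [Module R M]
    [AddCommMonoid N] [Module R N] (f : M →ₗ[R] N) {p : Submodule R M} [Module.Free R p]
    (h : Set.BijOn f p Set.univ) : Module.Free R N :=
  Module.Free.of_equiv <| LinearEquiv.ofBijective (f.domRestrict p)
    ⟨fun x y hxy => Subtype.ext (h.injOn x.2 y.2 hxy),
      fun y => let ⟨x, hx, hxy⟩ := h.surjOn (Set.mem_univ y); ⟨⟨x, hx⟩, hxy⟩⟩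

namespace MvPolynomial

open Finsupp (fitCount)

variable {σ A : Type*} [CommRing A] (T : σ →₀ ℕ) (a : A)

/-- The normal form modulo `X^T - a`: `X^I ↦ a^k X^(I - k • T)` with `k = fitCount T I`. -/
noncomputable def binomialNormalForm : MvPolynomial σ A →ₗ[A] MvPolynomial σ A :=
  (basisMonomials σ A).constr A fun I => monomial (I - fitCount T I • T) (a ^ fitCount T I)

theorem binomialNormalForm_monomial (I : σ →₀ ℕ) (c : A) :
    binomialNormalForm T a (monomial I c) =
      monomial (I - fitCount T I • T) (c * a ^ fitCount T I) := by
  have hc : monomial I c = c • basisMonomials σ A I := by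
    rw [coe_basisMonomials, smul_monomial, smul_eq_mul, mul_one]
  rw [hc, map_smul, binomialNormalForm, Module.Basis.constr_basis, smul_monomial, smul_eq_mul]

theorem sub_binomialNormalForm_mem (F : MvPolynomial σ A) :
    F - binomialNormalForm T a F ∈ Ideal.span {monomial T 1 - C a} := by
  induction F using MvPolynomial.induction_on' with
  | monomial I c =>
    set k := fitCount T I
    have hI : k • T + (I - k • T) = I := add_tsub_cancel_of_le (Finsupp.fitCount_nsmul_le T I)
    have hsplit : monomial I c - binomialNormalForm T a (monomial I c) =
        ((monomial T 1) ^ k - (C a) ^ k) * monomial (I - k • T) c := by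
      rw [binomialNormalForm_monomial, monomial_pow, one_pow, ← C_pow, sub_mul, monomial_mul,
        one_mul, C_mul_monomial, hI, mul_comm c]
    rw [hsplit]
    exact Ideal.mul_mem_right _ _ (Ideal.mem_span_singleton.2 (sub_dvd_pow_sub_pow _ _ _))
  | add p q hp hq =>
    rw [map_add, add_sub_add_comm]
    exact add_mem hp hq

variable {T}

theorem binomialNormalForm_mul_eq_zero (hT : T ≠ 0) (g : MvPolynomial σ A) :
    binomialNormalForm T a ((monomial T 1 - C a) * g) = 0 := by
  induction g using MvPolynomial.induction_on' with
  | monomial I c =>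
    have hI : T + I - (fitCount T I + 1) • T = I - fitCount T I • T := by
      rw [succ_nsmul', tsub_add_eq_tsub_tsub, add_tsub_cancel_left]
    rw [sub_mul, monomial_mul, one_mul, C_mul_monomial, map_sub, binomialNormalForm_monomial,
      binomialNormalForm_monomial, Finsupp.fitCount_add_self hT, hI, pow_succ, sub_eq_zero]
    ring_nf
  | add p q hp hq =>
    rw [mul_add, map_add, hp, hq, add_zero]

theorem binomialNormalForm_mem_restrictSupport (hT : T ≠ 0) (F : MvPolynomial σ A) :
    binomialNormalForm T a F ∈ restrictSupport A {I | ¬ T ≤ I} := by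
  induction F using MvPolynomial.induction_on' with
  | monomial I c =>
    rw [binomialNormalForm_monomial, monomial_mem_restrictSupport]
    exact Or.inl (Finsupp.not_le_sub_fitCount_nsmul hT)
  | add p q hp hq =>
    rw [map_add]
    exact add_mem hp hq

theorem binomialNormalForm_of_mem_restrictSupport (hT : T ≠ 0) {F : MvPolynomial σ A}
    (hF : F ∈ restrictSupport A {I | ¬ T ≤ I}) : binomialNormalForm T a F = F := by
  rw [restrictSupport_eq_span] at hF
  refine LinearMap.eqOn_span (g := LinearMap.id) ?_ hF
  rintro _ ⟨I, hI, rfl⟩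
  rw [binomialNormalForm_monomial, Finsupp.fitCount_of_not_le hT hI, zero_smul, tsub_zero,
    pow_zero, mul_one, LinearMap.id_apply]

theorem bijOn_mk_restrictSupport (hT : T ≠ 0) :
    Set.BijOn (Ideal.Quotient.mk (Ideal.span {monomial T 1 - C a}))
      (restrictSupport A {I | ¬ T ≤ I}) Set.univ := by
  refine ⟨Set.mapsTo_univ _ _, fun F hF G hG hFG => ?_, fun y _ => ?_⟩
  · obtain ⟨g, hg⟩ := Ideal.mem_span_singleton'.1 (Ideal.Quotient.eq.1 hFG)
    have hzero := binomialNormalForm_mul_eq_zero a hT g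
    rw [mul_comm, hg, binomialNormalForm_of_mem_restrictSupport a hT (sub_mem hF hG)] at hzero
    exact sub_eq_zero.1 hzero
  · obtain ⟨F, rfl⟩ := Ideal.Quotient.mk_surjective y
    exact ⟨binomialNormalForm T a F, binomialNormalForm_mem_restrictSupport a hT F,
      (Ideal.Quotient.eq.2 (sub_binomialNormalForm_mem T a F)).symm⟩

theorem free_quotient_span_monomial_sub_C (hT : T ≠ 0) :
    Module.Free A (MvPolynomial σ A ⧸ Ideal.span {monomial T 1 - C a}) :=
  have := Module.Free.of_basis (basisRestrictSupport A {I | ¬ T ≤ I})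
  .of_bijOn (Ideal.Quotient.mkₐ A _).toLinearMap (bijOn_mk_restrictSupport a hT)

end MvPolynomial

open MvPolynomial

theorem polynomial_quotient_flat_free_general
    (A : Type*) [CommRing A]
    (n : ℕ) (T : Fin n → ℕ) (hT : T ≠ 0) (a : A) :
    Set.BijOn
      (Ideal.Quotient.mk (Ideal.span {(∏ i, (X i : MvPolynomial (Fin n) A) ^ T i) - C a}))
      {F : MvPolynomial (Fin n) A | ∀ I : Fin n →₀ ℕ, (∀ i, T i ≤ I i) → coeff I F = 0}
      Set.univ ∧
    Module.Flat A
      (MvPolynomial (Fin n) A ⧸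
        Ideal.span {(∏ i, (X i : MvPolynomial (Fin n) A) ^ T i) - C a}) ∧
    Module.Free A
      (MvPolynomial (Fin n) A ⧸
        Ideal.span {(∏ i, (X i : MvPolynomial (Fin n) A) ^ T i) - C a}) := by
  set T' : Fin n →₀ ℕ := Finsupp.equivFunOnFinite.symm T
  have hT' : T' ≠ 0 := fun h => hT (funext fun i => by simpa [T'] using DFunLike.congr_fun h i)
  have hprod : ∏ i, (X i : MvPolynomial (Fin n) A) ^ T i = monomial T' 1 := by
    rw [← prod_X_pow_eq_monomial, ← Finsupp.prod, Finsupp.prod_fintype _ _ fun _ => pow_zero _]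
    rfl
  have hM : {F : MvPolynomial (Fin n) A | ∀ I : Fin n →₀ ℕ, (∀ i, T i ≤ I i) → coeff I F = 0} =
      restrictSupport A {I | ¬ T' ≤ I} := by
    ext F
    simp only [Set.mem_ofPred_eq, SetLike.mem_coe, mem_restrictSupport_iff, Set.subset_def,
      mem_support_iff, Finsupp.le_def, T', Finsupp.coe_equivFunOnFinite_symm]
    exact forall_congr' fun I => not_imp_not.symm
  have hfree := free_quotient_span_monomial_sub_C a hT'
  rw [hprod, hM]
  exact ⟨bijOn_mk_restrictSupport a hT', Module.Flat.of_free, hfree⟩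

/-- Let `A` be a commutative ring, `T ∈ ℕⁿ` nonzero, and `a ∈ A`.  Then
`R = A[X₁,…,Xₙ]/(X^T − a)` is flat over `A`; indeed the natural map from the
`A`-module of polynomials supported on exponents `I` with `T ≰ I` to `R` is
bijective, so `R` is a free `A`-module. -/
theorem polynomial_quotient_flat_free
    (A : Type*) [CommRing A]
    (n : ℕ) (hn : 1 ≤ n) (T : Fin n → ℕ) (hT : T ≠ 0) (a : A) :
    Set.BijOn
      (Ideal.Quotient.mk (Ideal.span {(∏ i, (X i : MvPolynomial (Fin n) A) ^ T i) - C a}))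
      {F : MvPolynomial (Fin n) A | ∀ I : Fin n →₀ ℕ, (∀ i, T i ≤ I i) → coeff I F = 0}
      Set.univ ∧
    Module.Flat A
      (MvPolynomial (Fin n) A ⧸
        Ideal.span {(∏ i, (X i : MvPolynomial (Fin n) A) ^ T i) - C a}) ∧
    Module.Free A
      (MvPolynomial (Fin n) A ⧸
        Ideal.span {(∏ i, (X i : MvPolynomial (Fin n) A) ^ T i) - C a}) :=
  polynomial_quotient_flat_free_general A n T hT a
end

section
/- Let (C, m_C) → (B, m_B) be a surjective local homomorphism h of noetherian local rings, and suppose there is a noetherian local ring (A, m_A) with flat local homomorphisms g : A → C and f : A → B satisfying f = h∘g. If h induces an isomorphism C/m_A C ≅ B/m_A B, then h is an isomorphism. -/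
/-!
Let `K = ker h` and `I = m_A C`. Injectivity of `C/I → B/m_A B` gives `K ⊆ I`, and flatness of
`B` over `A` applied to `0 → K → C → B → 0` gives `K ∩ I = I K`. Hence `K = I K`, and since `I`
lies in the maximal ideal of `C` and `K` is finitely generated, Nakayama's lemma gives `K = 0`.
-/

open IsLocalRing

theorem AlgHom.ker_inf_map_eq_map_mul_ker_of_flat {A C B : Type*} [CommRing A] [CommRing C]
    [CommRing B] [Algebra A C] [Algebra A B] [Module.Flat A B] (h : C →ₐ[A] B)
    (hh : Function.Surjective h) (I : Ideal A) :
    RingHom.ker h ⊓ I.map (algebraMap A C) = I.map (algebraMap A C) * RingHom.ker h := by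
  apply Submodule.restrictScalars_injective A
  rw [Submodule.restrictScalars_inf, ← Ideal.smul_top_eq_map, ← Ideal.smul_eq_mul,
    Ideal.smul_restrictScalars]
  exact LinearMap.ker_inf_smul_top_eq_smul_of_flat I h.toLinearMap hh

theorem RingHom.ker_le_of_quotientMap_injective {C B : Type*} [CommRing C] [CommRing B]
    {I : Ideal C} {J : Ideal B} (h : C →+* B) (hIJ : I ≤ J.comap h)
    (hinj : Function.Injective (Ideal.quotientMap J h hIJ)) : RingHom.ker h ≤ I := by
  intro x hx
  rw [← Ideal.Quotient.eq_zero_iff_mem]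
  apply hinj
  rw [Ideal.quotientMap_mk, RingHom.mem_ker.mp hx, map_zero, map_zero]

theorem surjective_flat_local_hom_bijective_general
    (A B C : Type*) [CommRing A] [IsLocalRing A] [CommRing B]
    [CommRing C] [IsLocalRing C] [IsNoetherianRing C]
    (g : A →+* C) (f : A →+* B) (h : C →+* B) [IsLocalHom g]
    (hcomp : f = h.comp g)
    (hf : @Module.Flat A B _ _ f.toModule)
    (hsurj : Function.Surjective h)
    (hle : Ideal.map g (IsLocalRing.maximalIdeal A) ≤
      Ideal.comap h (Ideal.map f (IsLocalRing.maximalIdeal A)))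
    (hiso : Function.Bijective
      (Ideal.quotientMap (Ideal.map f (IsLocalRing.maximalIdeal A)) h hle)) :
    Function.Bijective h := by
  subst hcomp
  algebraize [g, h, h.comp g]
  set I := Ideal.map g (maximalIdeal A)
  have hKI : RingHom.ker h ≤ I := RingHom.ker_le_of_quotientMap_injective h hle hiso.1
  have hK : RingHom.ker h = I * RingHom.ker h :=
    calc RingHom.ker h = RingHom.ker h ⊓ I := (inf_eq_left.mpr hKI).symm
      _ = I * RingHom.ker h :=
        (IsScalarTower.toAlgHom A C B).ker_inf_map_eq_map_mul_ker_of_flat hsurj _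
  have hIjac : I ≤ Ideal.jacobson ⊥ := by
    rw [jacobson_eq_maximalIdeal ⊥ bot_ne_top]
    exact map_maximalIdeal_le g
  refine ⟨(RingHom.injective_iff_ker_eq_bot h).mpr ?_, hsurj⟩
  exact Submodule.eq_bot_of_le_smul_of_le_jacobson_bot I _ (IsNoetherian.noetherian _)
    hK.le hIjac

/-- Let `h : (C, m_C) → (B, m_B)` be a surjective local homomorphism of noetherian
local rings, and suppose there is a noetherian local ring `(A, m_A)` with flat local
homomorphisms `g : A → C` and `f : A → B` satisfying `f = h ∘ g`.  If `h` induces an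
isomorphism `C/m_A C ≅ B/m_A B`, then `h` is an isomorphism (bijective). -/
theorem surjective_flat_local_hom_bijective
    (A B C : Type*) [CommRing A] [IsLocalRing A] [IsNoetherianRing A]
    [CommRing B] [IsLocalRing B] [IsNoetherianRing B]
    [CommRing C] [IsLocalRing C] [IsNoetherianRing C]
    (g : A →+* C) (f : A →+* B) (h : C →+* B)
    [IsLocalHom g] [IsLocalHom f] [IsLocalHom h]
    (hcomp : f = h.comp g)
    (hg : @Module.Flat A C _ _ g.toModule)
    (hf : @Module.Flat A B _ _ f.toModule)
    (hsurj : Function.Surjective h)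
    (hle : Ideal.map g (IsLocalRing.maximalIdeal A) ≤
      Ideal.comap h (Ideal.map f (IsLocalRing.maximalIdeal A)))
    (hiso : Function.Bijective
      (Ideal.quotientMap (Ideal.map f (IsLocalRing.maximalIdeal A)) h hle)) :
    Function.Bijective h :=
  surjective_flat_local_hom_bijective_general A B C g f h hcomp hf hsurj hle hiso
end

section
/- Let f : Q → P and g : Q → R be homomorphisms of commutative monoids. Define a relation on P × R by (p, r) ∼ (p′, r′) iff there exist q, q′ ∈ Q with (p, r)·(f(q), g(q′)) = (p′, r′)·(f(q′), g(q)). Then ∼ is an equivalence relation, and the quotient P ⊞_Q R := (P × R)/∼ is a commutative monoid under componentwise multiplication. -/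
/-- The relation on `P × R` defining the pushout-type monoid `P ⊞_Q R`:
`(p, r) ∼ (p′, r′)` iff there exist `q, q′ ∈ Q` with
`(p, r)·(f q, g q′) = (p′, r′)·(f q′, g q)`. -/
def pushoutRel {Q P R : Type*} [Mul P] [Mul R] (f : Q → P) (g : Q → R) :
    P × R → P × R → Prop :=
  fun x y => ∃ q q' : Q, x.1 * f q = y.1 * f q' ∧ x.2 * g q' = y.2 * g q

/-- For monoid homomorphisms `f : Q → P` and `g : Q → R`, the relation `∼` defining
`P ⊞_Q R` is an equivalence relation, and componentwise multiplication on `P × R`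
descends to the quotient, making `P ⊞_Q R := (P × R)/∼` a commutative monoid under
componentwise multiplication. -/
theorem pushoutRel_equivalence_and_mul_compat
    {Q P R : Type*} [CommMonoid Q] [CommMonoid P] [CommMonoid R]
    (f : Q →* P) (g : Q →* R) :
    Equivalence (pushoutRel (⇑f) (⇑g)) ∧
    (∀ x x' y y' : P × R, pushoutRel (⇑f) (⇑g) x x' → pushoutRel (⇑f) (⇑g) y y' →
      pushoutRel (⇑f) (⇑g) (x * y) (x' * y')) := by
  constructor
  · refine ⟨fun x => ⟨1, 1, rfl, rfl⟩, ?_, ?_⟩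
    · rintro x y ⟨q, q', h1, h2⟩
      exact ⟨q', q, h1.symm, h2.symm⟩
    · rintro x y z ⟨q1, q1', h1, h2⟩ ⟨q2, q2', h3, h4⟩
      refine ⟨q1 * q2, q1' * q2', ?_, ?_⟩
      · simp only [map_mul, ← mul_assoc, h1]
        rw [mul_assoc, mul_comm (f q1') (f q2), ← mul_assoc, h3]
        rw [mul_right_comm]
      · simp only [map_mul, ← mul_assoc, h2]
        rw [mul_assoc, mul_comm (g q1) (g q2'), ← mul_assoc, h4]
        rw [mul_right_comm]
  · rintro x x' y y' ⟨q1, q1', h1, h2⟩ ⟨q2, q2', h3, h4⟩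
    refine ⟨q1 * q2, q1' * q2', ?_, ?_⟩
    · simp only [Prod.fst_mul, map_mul]
      calc x.1 * y.1 * (f q1 * f q2) = (x.1 * f q1) * (y.1 * f q2) := by rw [mul_mul_mul_comm]
        _ = (x'.1 * f q1') * (y'.1 * f q2') := by rw [h1, h3]
        _ = x'.1 * y'.1 * (f q1' * f q2') := by rw [mul_mul_mul_comm]
    · simp only [Prod.snd_mul, map_mul]
      calc x.2 * y.2 * (g q1' * g q2') = (x.2 * g q1') * (y.2 * g q2') := by rw [mul_mul_mul_comm]
        _ = (x'.2 * g q1) * (y'.2 * g q2) := by rw [h2, h4]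
        _ = x'.2 * y'.2 * (g q1 * g q2) := by rw [mul_mul_mul_comm]
end

section
/- Let f : Q → P and g : Q → R be homomorphisms of commutative monoids, with P and R integral (cancellative). Then P ⊞_Q R is integral, and it is the pushout of (f, g) in the category of integral commutative monoids: for any commutative diagram with an integral monoid M and maps α′ : P → M, β′ : R → M satisfying α′∘f = β′∘g, there is a unique homomorphism γ : P ⊞_Q R → M with γ∘α = α′ and γ∘β = β′, where α(p) = [p,1] and β(r) = [1,r]. -/
lemma pushoutRel_equiv {Q P R : Type*} [CommMonoid Q] [CommMonoid P] [CommMonoid R]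
    (f : Q →* P) (g : Q →* R) : Equivalence (pushoutRel (⇑f) (⇑g)) := by
  constructor
  · intro x; exact ⟨1, 1, rfl, rfl⟩
  · rintro x y ⟨q, q', h1, h2⟩; exact ⟨q', q, h1.symm, h2.symm⟩
  · rintro x y z ⟨q1, q1', h1, h2⟩ ⟨q2, q2', h3, h4⟩
    refine ⟨q1 * q2, q1' * q2', ?_, ?_⟩
    · simp only [map_mul, ← mul_assoc, h1]
      rw [mul_right_comm, h3, mul_right_comm]
    · simp only [map_mul, ← mul_assoc, h2]
      rw [mul_right_comm, h4, mul_right_comm]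

lemma pushout_mk_eq_iff {Q P R : Type*} [CommMonoid Q] [CommMonoid P] [CommMonoid R]
    (f : Q →* P) (g : Q →* R) (x y : P × R) :
    Quot.mk (pushoutRel (⇑f) (⇑g)) x = Quot.mk (pushoutRel (⇑f) (⇑g)) y ↔
      pushoutRel (⇑f) (⇑g) x y := by
  constructor
  · intro h
    exact ((pushoutRel_equiv f g).eqvGen_iff).mp (Quot.eqvGen_exact h)
  · exact Quot.sound


/-- If `P` and `R` are integral (cancellative) commutative monoids, then `P ⊞_Q R`
is integral, and it is the pushout of `(f, g)` in the category of integral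
commutative monoids: for any integral commutative monoid `M` and homomorphisms
`α′ : P → M`, `β′ : R → M` with `α′ ∘ f = β′ ∘ g`, there is a unique multiplicative
map `γ : P ⊞_Q R → M` with `γ ∘ α = α′` and `γ ∘ β = β′`, where `α p = [p,1]`,
`β r = [1,r]`. -/
theorem pushout_integral_and_universal
    {Q P R : Type*} [CommMonoid Q] [CancelCommMonoid P] [CancelCommMonoid R]
    (f : Q →* P) (g : Q →* R) :
    (∀ x y z : P × R,
        Quot.mk (pushoutRel (⇑f) (⇑g)) (x * z) = Quot.mk (pushoutRel (⇑f) (⇑g)) (y * z) →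
        Quot.mk (pushoutRel (⇑f) (⇑g)) x = Quot.mk (pushoutRel (⇑f) (⇑g)) y) ∧
    (∀ (M : Type*) [CancelCommMonoid M] (α' : P →* M) (β' : R →* M),
      α'.comp f = β'.comp g →
      ∃! γ : Quot (pushoutRel (⇑f) (⇑g)) → M,
        (∀ x y : P × R, γ (Quot.mk _ (x * y)) = γ (Quot.mk _ x) * γ (Quot.mk _ y)) ∧
        γ (Quot.mk _ 1) = 1 ∧
        (∀ p : P, γ (Quot.mk _ (p, (1 : R))) = α' p) ∧
        (∀ r : R, γ (Quot.mk _ ((1 : P), r)) = β' r)) := by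

  constructor
  · intro x y z h
    rw [pushout_mk_eq_iff] at h ⊢
    obtain ⟨q, q', h1, h2⟩ := h
    refine ⟨q, q', ?_, ?_⟩
    · have : z.1 * (x.1 * f q) = z.1 * (y.1 * f q') := by
        rw [← mul_assoc, ← mul_assoc, mul_comm z.1 x.1, mul_comm z.1 y.1]
        exact h1
      exact mul_left_cancel this
    · have : z.2 * (x.2 * g q') = z.2 * (y.2 * g q) := by
        rw [← mul_assoc, ← mul_assoc, mul_comm z.2 x.2, mul_comm z.2 y.2]
        exact h2
      exact mul_left_cancel this
  · intro M _ α' β' hcomm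
    have hfg : ∀ q : Q, α' (f q) = β' (g q) := fun q =>
      DFunLike.congr_fun hcomm q
    refine ⟨Quot.lift (fun x => α' x.1 * β' x.2) ?_, ⟨?_, ?_, ?_, ?_⟩, ?_⟩
    · rintro x y ⟨q, q', h1, h2⟩
      have key : (α' x.1 * β' x.2) * (β' (g q) * β' (g q')) =
          (α' y.1 * β' y.2) * (β' (g q) * β' (g q')) := by
        calc (α' x.1 * β' x.2) * (β' (g q) * β' (g q'))
            = (α' x.1 * α' (f q)) * (β' x.2 * β' (g q')) := by
              rw [hfg]; simp [mul_comm, mul_left_comm, mul_assoc]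
          _ = α' (x.1 * f q) * β' (x.2 * g q') := by rw [map_mul, map_mul]
          _ = α' (y.1 * f q') * β' (y.2 * g q) := by rw [h1, h2]
          _ = (α' y.1 * α' (f q')) * (β' y.2 * β' (g q)) := by rw [map_mul, map_mul]
          _ = (α' y.1 * β' y.2) * (β' (g q) * β' (g q')) := by
              rw [hfg]; simp [mul_comm, mul_left_comm, mul_assoc]
      exact mul_right_cancel key
    · intro x y
      simp only [Quot.lift, Prod.fst_mul, Prod.snd_mul, map_mul]
      simp [mul_comm, mul_left_comm, mul_assoc]
    · simp
    · intro p; simp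
    · intro r; simp
    · rintro γ ⟨hmul, hone, hp, hr⟩
      funext x
      induction x using Quot.ind with
      | _ x =>
        have : (x.1, (1:R)) * ((1:P), x.2) = x := by simp [Prod.ext_iff]
        calc γ (Quot.mk _ x) = γ (Quot.mk _ ((x.1, (1:R)) * ((1:P), x.2))) := by rw [this]
          _ = α' x.1 * β' x.2 := by rw [hmul, hp, hr]
end

section
/- Let f : Q → P be an integral homomorphism of fine, sharp monoids, and suppose P has a semistable structure (σ, q₀, Δ, B) over Q. Then the following are equivalent: (1) f does not split, i.e., there is no submonoid N of P with P = f(Q) × N; (2) the support of Δ has at least 2 elements; (3) every element x of σ is irreducible in P and does not lie in f(Q). -/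
section SemistableMonoid

variable {Q P : Type*} [AddCommMonoid Q] [AddCommMonoid P]

/-- `T·σ = Σ_x T(x)·x` for a finitely supported `T : P →₀ ℕ`. -/
def monDot (T : P →₀ ℕ) : P := T.sum fun x n => n • x

/-- A commutative monoid is sharp if `x + y = 0` implies `x = y = 0`. -/
def MonSharp (P : Type*) [AddCommMonoid P] : Prop :=
  ∀ x y : P, x + y = 0 → x = 0 ∧ y = 0

/-- An element `x` of a sharp monoid is irreducible if `x = y + z` implies
`y = 0` or `z = 0`. -/
def MonIrreducible (x : P) : Prop := ∀ y z : P, x = y + z → y = 0 ∨ z = 0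

/-- A homomorphism of monoids `f : Q → P` is integral if whenever
`f q + p = f q' + p'` there are `q₁, q₂ ∈ Q` and `p'' ∈ P` with `q + q₁ = q' + q₂`,
`p = f q₁ + p''` and `p' = f q₂ + p''`. -/
def MonIntegralHom (f : Q →+ P) : Prop :=
  ∀ (q q' : Q) (p p' : P), f q + p = f q' + p' →
    ∃ (q₁ q₂ : Q) (p'' : P), q + q₁ = q' + q₂ ∧ p = f q₁ + p'' ∧ p' = f q₂ + p''

/-- `f : Q → P` splits if there is a submonoid `N` of `P` with `P = f(Q) × N`. -/
def MonSplits (f : Q →+ P) : Prop :=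
  ∃ N : AddSubmonoid P, Function.Bijective (fun x : Q × N => f x.1 + (x.2 : P))

/-- `P` has a semistable structure `(σ, q₀, Δ, B)` over `Q` (via `f`). -/
def IsSemistableStructure (f : Q →+ P) (σ : Finset P) (q₀ : Q) (Δ B : P →₀ ℕ) : Prop :=
  -- (S1)
  q₀ ≠ 0 ∧ Δ ≠ 0 ∧ (∀ x, Δ x ≤ 1) ∧
  ↑Δ.support ⊆ (σ : Set P) ∧ ↑B.support ⊆ (σ : Set P) ∧
  -- (S2): `P` is generated by `σ` and `f(Q)`, and `ℕ^σ → P` is injective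
  (∀ p : P, ∃ (T : P →₀ ℕ) (q : Q), ↑T.support ⊆ (σ : Set P) ∧ p = monDot T + f q) ∧
  (∀ T T' : P →₀ ℕ, ↑T.support ⊆ (σ : Set P) → ↑T'.support ⊆ (σ : Set P) →
    monDot T = monDot T' → T = T') ∧
  -- (S3)
  Disjoint Δ.support B.support ∧ monDot Δ = f q₀ + monDot B ∧
  -- (S4)
  (∀ (T T' : P →₀ ℕ) (q : Q), ↑T.support ⊆ (σ : Set P) → ↑T'.support ⊆ (σ : Set P) →
    monDot T = f q + monDot T' → q ≠ 0 → ∀ x ∈ Δ.support, 0 < T x)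

end SemistableMonoid


/-!
Write elements of `P` as `T·σ + f q`. By (S4), a nonzero summand from `Q` forces every point of
`Supp Δ` to occur in `T`; so an element generated by `σ` without some `x₀ ∈ Supp Δ` has no nonzero
summand from `Q` at all (sharpness of `Q` disposes of the `Q`-part of the other side).

If `Supp Δ` has a second point `w`, every `x ∈ σ` avoids `w`, so a decomposition of `x` has no
`Q`-part and injectivity of `T ↦ T·σ` makes `x` an irreducible outside `f(Q)`. Irreducibles
outside `f(Q)` lie in every complement `N` of `f(Q)`, and then `Δ·σ = f q₀ + B·σ` with `q₀ ≠ 0`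
gives two decompositions of one element. If `Supp Δ = {x₀}`, then `x₀ = f q₀ + B·σ`, and the
submonoid generated by `σ \ {x₀}` is a complement: together with `f(Q)` it generates `P`, and
integrality of `f` reduces uniqueness of the decomposition to the observation above.
-/

open Finset

section MonDot

variable {P : Type*} [AddCommMonoid P]

lemma monDot_eq_linearCombination (T : P →₀ ℕ) :
    monDot T = Finsupp.linearCombination ℕ id T :=
  (Finsupp.linearCombination_apply ℕ T).symm

lemma monDot_zero : monDot (0 : P →₀ ℕ) = 0 := Finsupp.sum_zero_index

lemma monDot_add (T T' : P →₀ ℕ) : monDot (T + T') = monDot T + monDot T' :=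
  Finsupp.sum_add_index' (fun x => zero_smul ℕ x) (fun x m n => add_smul m n x)

lemma monDot_single_one (x : P) : monDot (Finsupp.single x 1) = x :=
  (Finsupp.sum_single_index (zero_smul ℕ x)).trans (one_smul ℕ x)

lemma mem_closure_iff_exists_monDot {s : Set P} {p : P} :
    p ∈ AddSubmonoid.closure s ↔ ∃ T : P →₀ ℕ, ↑T.support ⊆ s ∧ monDot T = p := by
  have h := Finsupp.mem_span_image_iff_linearCombination ℕ (v := (id : P → P)) (s := s) (x := p)
  rw [Set.image_id] at h
  rw [← Submodule.span_nat_eq_addSubmonoidClosure, Submodule.mem_toAddSubmonoid, h]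
  simp only [Finsupp.mem_supported, monDot_eq_linearCombination]

end MonDot

section Splitting

variable {Q P : Type*} [AddCommMonoid Q] [AddCommMonoid P]

lemma surjective_map_add_iff_sup_eq_top (f : Q →+ P) (N : AddSubmonoid P) :
    Function.Surjective (fun x : Q × N => f x.1 + (x.2 : P)) ↔
      AddMonoidHom.mrange f ⊔ N = ⊤ := by
  rw [eq_top_iff]
  refine ⟨fun h p _ => ?_, fun h p => ?_⟩
  · obtain ⟨⟨q, n⟩, rfl⟩ := h p
    exact AddSubmonoid.add_mem_sup ⟨q, rfl⟩ n.2
  · obtain ⟨_, ⟨q, rfl⟩, n, hn, rfl⟩ := AddSubmonoid.mem_sup.1 (h (AddSubmonoid.mem_top p))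
    exact ⟨(q, ⟨n, hn⟩), rfl⟩

lemma mem_of_sup_eq_top {f : Q →+ P} {N : AddSubmonoid P} (hN : AddMonoidHom.mrange f ⊔ N = ⊤)
    {x : P} (hx : MonIrreducible x) (hxf : x ∉ Set.range f) : x ∈ N := by
  obtain ⟨-, ⟨q, rfl⟩, n, hn, hqn⟩ := AddSubmonoid.mem_sup.1 (hN ▸ AddSubmonoid.mem_top x)
  rcases hx _ _ hqn.symm with hq | rfl
  · rwa [← hqn, hq, zero_add]
  · exact absurd ⟨q, by rw [← hqn, add_zero]⟩ hxf

end Splitting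

namespace IsSemistableStructure

variable {Q P : Type*} [AddCommMonoid Q] [AddCommMonoid P] {f : Q →+ P} {σ : Finset P} {q₀ : Q}
  {Δ B : P →₀ ℕ}

lemma card_support_Δ_pos (hss : IsSemistableStructure f σ q₀ Δ B) : 0 < #Δ.support :=
  card_pos.2 (Finsupp.support_nonempty_iff.2 hss.2.1)

lemma closure_sup_mrange_eq_top (hss : IsSemistableStructure f σ q₀ Δ B) :
    AddSubmonoid.closure ↑σ ⊔ AddMonoidHom.mrange f = ⊤ := by
  obtain ⟨-, -, -, -, -, hgen, -⟩ := hss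
  refine eq_top_iff.2 fun p _ => ?_
  obtain ⟨T, q, hT, rfl⟩ := hgen p
  exact AddSubmonoid.add_mem_sup (mem_closure_iff_exists_monDot.2 ⟨T, hT, rfl⟩) ⟨q, rfl⟩

lemma ne_zero_of_mem (hss : IsSemistableStructure f σ q₀ Δ B) {x : P} (hx : x ∈ σ) :
    x ≠ 0 := by
  obtain ⟨-, -, -, -, -, -, hinj, -⟩ := hss
  intro hx0
  have hsingle : ↑(Finsupp.single x 1).support ⊆ (σ : Set P) := by simpa using hx
  have := hinj _ 0 hsingle (by simp) (by rw [monDot_single_one, monDot_zero, hx0])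
  simp at this

lemma eq_zero_of_mem_closure_diff (hQ : MonSharp Q) (hss : IsSemistableStructure f σ q₀ Δ B)
    {x₀ n p : P} {q : Q} (hx₀ : x₀ ∈ Δ.support)
    (hn : n ∈ AddSubmonoid.closure ((σ : Set P) \ {x₀})) (h : n = f q + p) : q = 0 := by
  obtain ⟨-, -, -, -, -, hgen, -, -, -, hS4⟩ := hss
  obtain ⟨T, hT, rfl⟩ := mem_closure_iff_exists_monDot.1 hn
  obtain ⟨S, q', hS, rfl⟩ := hgen p
  have hTσ : ↑T.support ⊆ (σ : Set P) := hT.trans Set.sdiff_subset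
  have hTx₀ : T x₀ = 0 := Finsupp.notMem_support_iff.1 fun hx => by simpa using hT hx
  have hqq' : q + q' = 0 := by
    by_contra hne
    have := hS4 T S (q + q') hTσ hS (by rw [h, map_add]; abel) hne x₀ hx₀
    omega
  exact (hQ q q' hqq').1

lemma monIrreducible_of_mem (hQ : MonSharp Q) (hss : IsSemistableStructure f σ q₀ Δ B)
    {x w : P} (hx : x ∈ σ) (hw : w ∈ Δ.support) (hwx : w ≠ x) : MonIrreducible x := by
  classical
  have ⟨_, _, _, _, _, hgen, hinj, _⟩ := hss
  have hsingle : ↑(Finsupp.single x 1).support ⊆ (σ : Set P) := by simpa using hx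
  intro u v huv
  obtain ⟨T, q, hT, rfl⟩ := hgen u
  obtain ⟨T', q', hT', rfl⟩ := hgen v
  have hq : q + q' = 0 := hss.eq_zero_of_mem_closure_diff hQ hw
    (AddSubmonoid.subset_closure ⟨hx, hwx.symm⟩) (p := monDot (T + T'))
    (by rw [huv, map_add, monDot_add]; abel)
  obtain ⟨rfl, rfl⟩ := hQ q q' hq
  have hTT' : T + T' = Finsupp.single x 1 := by
    refine hinj _ _ ?_ hsingle (by rw [monDot_add, monDot_single_one, huv]; simp)
    exact (coe_subset.2 Finsupp.support_add).trans (by simpa using Set.union_subset hT hT')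
  have hdeg := congrArg Finsupp.degree hTT'
  rw [map_add, Finsupp.degree_single] at hdeg
  rcases Nat.add_eq_one_iff.1 hdeg with ⟨h, -⟩ | ⟨-, h⟩
  · left; rw [(Finsupp.degree_eq_zero_iff T).1 h, monDot_zero, map_zero, add_zero]
  · right; rw [(Finsupp.degree_eq_zero_iff T').1 h, monDot_zero, map_zero, add_zero]

lemma notMem_range_of_mem (hQ : MonSharp Q) (hss : IsSemistableStructure f σ q₀ Δ B)
    {x w : P} (hx : x ∈ σ) (hw : w ∈ Δ.support) (hwx : w ≠ x) : x ∉ Set.range f := by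
  rintro ⟨q, rfl⟩
  have hq := hss.eq_zero_of_mem_closure_diff hQ hw (AddSubmonoid.subset_closure ⟨hx, hwx.symm⟩)
    (add_zero (f q)).symm
  exact hss.ne_zero_of_mem hx (by rw [hq, map_zero])

lemma forall_monIrreducible_and_notMem_range (hQ : MonSharp Q)
    (hss : IsSemistableStructure f σ q₀ Δ B) (hcard : 2 ≤ #Δ.support) :
    ∀ x ∈ σ, MonIrreducible x ∧ x ∉ Set.range f := fun x hx => by
  obtain ⟨w, hw, hwx⟩ := exists_mem_ne hcard x
  exact ⟨hss.monIrreducible_of_mem hQ hx hw hwx, hss.notMem_range_of_mem hQ hx hw hwx⟩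

lemma injective_add_closure_diff (hQ : MonSharp Q) (hf : MonIntegralHom f)
    (hss : IsSemistableStructure f σ q₀ Δ B) {x₀ : P} (hx₀ : x₀ ∈ Δ.support) :
    Function.Injective
      (fun x : Q × AddSubmonoid.closure ((σ : Set P) \ {x₀}) => f x.1 + (x.2 : P)) := by
  rintro ⟨q, n, hn⟩ ⟨q', n', hn'⟩ h
  obtain ⟨q₁, q₂, p, hqq, rfl, rfl⟩ := hf q q' n n' h
  obtain rfl := hss.eq_zero_of_mem_closure_diff hQ hx₀ hn rfl
  obtain rfl := hss.eq_zero_of_mem_closure_diff hQ hx₀ hn' rfl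
  simpa using hqq

lemma mrange_sup_closure_diff_eq_top (hss : IsSemistableStructure f σ q₀ Δ B) {x₀ : P}
    (hΔ : Δ.support = {x₀}) :
    AddMonoidHom.mrange f ⊔ AddSubmonoid.closure ((σ : Set P) \ {x₀}) = ⊤ := by
  have ⟨_, _, hΔle, _, hB, _, _, hdisj, hS3, _⟩ := hss
  have hΔx₀ : Δ = Finsupp.single x₀ 1 := by
    obtain ⟨hne, hsingle⟩ := Finsupp.support_eq_singleton.1 hΔ
    rwa [show Δ x₀ = 1 by have := hΔle x₀; omega] at hsingle
  have hB : ↑B.support ⊆ (σ : Set P) \ {x₀} := fun y hy => ⟨hB hy, fun hyx₀ =>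
    disjoint_left.1 hdisj (hΔ ▸ mem_singleton_self x₀) (Set.mem_singleton_iff.1 hyx₀ ▸ hy)⟩
  rw [eq_top_iff, ← hss.closure_sup_mrange_eq_top, sup_le_iff, AddSubmonoid.closure_le]
  refine ⟨fun x hx => ?_, le_sup_left⟩
  by_cases hxx₀ : x = x₀
  · rw [show x = f q₀ + monDot B by rw [hxx₀, ← hS3, hΔx₀, monDot_single_one]]
    exact AddSubmonoid.add_mem_sup ⟨q₀, rfl⟩ (mem_closure_iff_exists_monDot.2 ⟨B, hB, rfl⟩)
  · exact AddSubmonoid.mem_sup_right (AddSubmonoid.subset_closure ⟨hx, hxx₀⟩)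

lemma monSplits_of_card_eq_one (hQ : MonSharp Q) (hf : MonIntegralHom f)
    (hss : IsSemistableStructure f σ q₀ Δ B) (hcard : #Δ.support = 1) : MonSplits f := by
  obtain ⟨x₀, hx₀⟩ := card_eq_one.1 hcard
  exact ⟨_, hss.injective_add_closure_diff hQ hf (hx₀ ▸ mem_singleton_self x₀),
    (surjective_map_add_iff_sup_eq_top f _).2 (hss.mrange_sup_closure_diff_eq_top hx₀)⟩

lemma not_monSplits (hss : IsSemistableStructure f σ q₀ Δ B)
    (hσ : ∀ x ∈ σ, MonIrreducible x ∧ x ∉ Set.range f) : ¬ MonSplits f := by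
  rintro ⟨N, hinj, hsurj⟩
  obtain ⟨hq₀, -, -, hΔ, hB, -, -, -, hS3, -⟩ := hss
  have hσN : AddSubmonoid.closure ↑σ ≤ N := AddSubmonoid.closure_le.2 fun x hx =>
    mem_of_sup_eq_top ((surjective_map_add_iff_sup_eq_top f N).1 hsurj) (hσ x hx).1 (hσ x hx).2
  have hmem {T : P →₀ ℕ} (hT : ↑T.support ⊆ (σ : Set P)) : monDot T ∈ N :=
    hσN (mem_closure_iff_exists_monDot.2 ⟨T, hT, rfl⟩)
  have := @hinj (q₀, ⟨_, hmem hB⟩) (0, ⟨_, hmem hΔ⟩) (by simp [hS3])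
  exact hq₀ (congrArg Prod.fst this)

end IsSemistableStructure

theorem semistable_no_split_tfae_general
    {Q P : Type*} [AddCancelCommMonoid Q] [AddCancelCommMonoid P]
    (hQ : MonSharp Q)
    (f : Q →+ P) (hf : MonIntegralHom f)
    (σ : Finset P) (q₀ : Q) (Δ B : P →₀ ℕ)
    (hss : IsSemistableStructure f σ q₀ Δ B) :
    (¬ MonSplits f ↔ 2 ≤ Δ.support.card) ∧
    (¬ MonSplits f ↔ ∀ x ∈ σ, MonIrreducible x ∧ x ∉ Set.range f) := by
  have htfae : [¬ MonSplits f, 2 ≤ #Δ.support,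
      ∀ x ∈ σ, MonIrreducible x ∧ x ∉ Set.range f].TFAE := by
    tfae_have 1 → 2 := fun hns => by
      by_contra hlt
      exact hns (hss.monSplits_of_card_eq_one hQ hf (by have := hss.card_support_Δ_pos; omega))
    tfae_have 2 → 3 := hss.forall_monIrreducible_and_notMem_range hQ
    tfae_have 3 → 1 := hss.not_monSplits
    tfae_finish
  exact ⟨htfae.out 0 1, htfae.out 0 2⟩

/-- Let `f : Q → P` be an integral homomorphism of fine, sharp monoids and suppose
`P` has a semistable structure `(σ, q₀, Δ, B)` over `Q`.  Then the following are
equivalent: (1) `f` does not split; (2) `Supp Δ` has at least two elements;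
(3) every `x ∈ σ` is irreducible and not in `f(Q)`. -/
theorem semistable_no_split_tfae
    {Q P : Type*} [AddCancelCommMonoid Q] [AddCancelCommMonoid P]
    [AddMonoid.FG Q] [AddMonoid.FG P]
    (hQ : MonSharp Q) (hP : MonSharp P)
    (f : Q →+ P) (hf : MonIntegralHom f)
    (σ : Finset P) (q₀ : Q) (Δ B : P →₀ ℕ)
    (hss : IsSemistableStructure f σ q₀ Δ B) :
    (¬ MonSplits f ↔ 2 ≤ Δ.support.card) ∧
    (¬ MonSplits f ↔ ∀ x ∈ σ, MonIrreducible x ∧ x ∉ Set.range f) :=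
  semistable_no_split_tfae_general hQ f hf σ q₀ Δ B hss
end

section
/- Let G be a finitely generated abelian group and R a commutative ring with a chosen class δ ∈ Ext¹(G, R^×). Then there exist units u₁,…,u_l ∈ R^× and integers a₁,…,a_l ≥ 2 with a₁⋯a_l equal to the order of the torsion subgroup of G, such that for any ring homomorphism f : R → S, if each f(uᵢ) has an aᵢ-th root vᵢ ∈ S, then the image of δ under the induced map Ext¹(G, R^×) → Ext¹(G, S^×) is zero. -/
/-!
Write `G ≅ F × ∏ⱼ ℤ/aⱼ` with `F` free and `aⱼ ≥ 2`, a quotient of the projective group `F × ℤˡ`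
by the relations `aⱼ eⱼ`. A lift of this presentation to `E` sends each relation `aⱼ eⱼ` to some
`i(uⱼ)` with `uⱼ ∈ R^×`. After pushing forward along `f`, the extension splits once
`aⱼ eⱼ ↦ f(uⱼ)` extends to `F × ℤˡ`, i.e. once each `f(uⱼ)` has an `aⱼ`-th root. The torsion
subgroup of `G` is `∏ⱼ ℤ/aⱼ`, of order `a₁⋯a_l`.
-/

theorem AddCommGroup.exists_addEquiv_free_prod_pi_zmod (G : Type*) [AddCommGroup G]
    [AddGroup.FG G] : ∃ (n l : ℕ) (a : Fin l → ℕ),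
      (∀ j, 2 ≤ a j) ∧ Nonempty (G ≃+ (Fin n →₀ ℤ) × ((j : Fin l) → ZMod (a j))) := by
  obtain ⟨n, ι, _, p, hp, e, ⟨φ⟩⟩ := equiv_free_prod_directSum_zmod G
  have : ∀ i, NeZero (p i ^ e i) := fun i => ⟨pow_ne_zero _ (hp i).ne_zero⟩
  have : Finite (DirectSum ι fun i => ZMod (p i ^ e i)) :=
    .of_equiv _ (DirectSum.addEquivProd _).symm.toEquiv
  obtain ⟨κ, _, m, hm, ⟨ψ⟩⟩ :=
    equiv_directSum_zmod_of_finite' (DirectSum ι fun i => ZMod (p i ^ e i))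
  let b := Fintype.equivFin κ
  exact ⟨n, Fintype.card κ, fun j => m (b.symm j), fun j => hm _, ⟨φ.trans <|
    (AddEquiv.refl _).prodCongr <| ψ.trans <| (DirectSum.addEquivProd _).trans
      (RingEquiv.piCongrLeft' (fun k => ZMod (m k)) b).toAddEquiv⟩⟩

theorem AddCommGroup.card_torsion_eq_of_addEquiv_prod {G F T : Type*} [AddCommGroup G]
    [AddCommGroup F] [AddCommGroup T] [IsAddTorsionFree F] (hT : IsAddTorsion T)
    (φ : G ≃+ F × T) : Nat.card (torsion G) = Nat.card T := by
  have htorsion : (torsion G).map (φ : G →+ F × T) = (⊥ : AddSubgroup F).prod ⊤ := by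
    rw [φ.map_torsion, torsion_sum, isAddTorsionFree_iff_torsion_eq_bot.mp inferInstance,
      torsion_eq_top_iff.mpr hT]
  rw [Nat.card_congr (φ.addSubgroupMap _).toEquiv, htorsion,
    Nat.card_congr (AddSubgroup.prodEquiv _ _).toEquiv, Nat.card_prod, AddSubgroup.card_bot,
    AddSubgroup.card_top, one_mul]

theorem AddMonoidHom.exists_comp_eq_of_lift {A E G P B : Type*} [AddCommGroup A]
    [AddCommGroup E] [AddCommGroup G] [AddCommGroup P] [AddCommGroup B]
    (i : A →+ E) (π : E →+ G) (hexact : π.ker ≤ i.range)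
    (ψ : P →+ E) (hψ : Function.Surjective (π.comp ψ))
    (f : A →+ B) (g : P →+ B) (hfg : ∀ p a, ψ p = i a → g p = f a) :
    ∃ ρ : E →+ B, ρ.comp i = f := by
  -- `E` is a quotient of `A × P` via `(a, p) ↦ i a + ψ p`, and `f + g` kills the kernel.
  have hsurj : Function.Surjective (i.coprod ψ) := by
    intro e
    obtain ⟨p, hp⟩ := hψ (π e)
    obtain ⟨a, ha⟩ := hexact (show e - ψ p ∈ π.ker by simp [AddMonoidHom.mem_ker, ← hp])
    exact ⟨(a, p), by simp [ha]⟩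
  have hker : (i.coprod ψ).ker ≤ (f.coprod g).ker := by
    rintro ⟨a, p⟩ h
    have hψp : ψ p = i (-a) := by
      rw [map_neg, eq_neg_iff_add_eq_zero, add_comm]
      exact h
    simp [AddMonoidHom.mem_ker, hfg p (-a) hψp]
  refine ⟨(i.coprod ψ).liftOfSurjective hsurj ⟨f.coprod g, hker⟩, AddMonoidHom.ext fun a => ?_⟩
  simpa using (i.coprod ψ).liftOfRightInverse_comp_apply _ (Function.rightInverse_surjInv hsurj)
    ⟨f.coprod g, hker⟩ (a, 0)

theorem exists_forall_exists_comp_eq_of_nsmul_eq {A E G F ι : Type*} [AddCommGroup A]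
    [AddCommGroup E] [AddCommGroup G] [AddCommGroup F] [Module.Projective ℤ F]
    [Fintype ι] [DecidableEq ι]
    (i : A →+ E) (π : E →+ G) (hi : Function.Injective i) (hπ : Function.Surjective π)
    (hexact : i.range = π.ker) (q : ι → ℕ) (φ : G ≃+ F × ((j : ι) → ZMod (q j))) :
    ∃ u : ι → A, ∀ (B : Type*) [AddCommGroup B] (f : A →+ B),
      (∀ j, ∃ v : B, q j • v = f (u j)) → ∃ ρ : E →+ B, ρ.comp i = f := by
  let θ : F × (ι → ℤ) →+ G := φ.symm.toAddMonoidHom.comp ((AddMonoidHom.id F).prodMap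
    (AddMonoidHom.pi fun j => (Int.castAddHom (ZMod (q j))).comp (Pi.evalAddMonoidHom _ j)))
  have hθ : Function.Surjective θ := by
    intro g
    refine ⟨((φ g).1, fun j => ((φ g).2 j).cast), φ.symm_apply_eq.mpr ?_⟩
    ext j <;> simp
  let κ : (ι → ℤ) →ₗ[ℤ] F × (ι → ℤ) :=
    LinearMap.inr ℤ F _ ∘ₗ LinearMap.mulLeft ℤ (fun j => (q j : ℤ))
  have hθ_eq_zero_iff : ∀ p, θ p = 0 ↔ ∃ z, κ z = p := by
    rintro ⟨x, y⟩
    simp [θ, κ, Prod.ext_iff, eq_comm (a := (0 : F)), funext_iff,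
      ZMod.intCast_zmod_eq_zero_iff_dvd, dvd_def, Classical.skolem, eq_comm (b := y _)]
  obtain ⟨ψ, hψ⟩ := Module.projective_lifting_property π.toIntLinearMap θ.toIntLinearMap hπ
  have hπψ : ∀ p, π (ψ p) = θ p := LinearMap.congr_fun hψ
  have hrange : ∀ j, ψ (κ (Pi.single j 1)) ∈ i.range := fun j => by
    rw [hexact, AddMonoidHom.mem_ker, hπψ, hθ_eq_zero_iff]
    exact ⟨_, rfl⟩
  choose u hu using hrange
  refine ⟨u, fun B _ f hv => ?_⟩
  choose v hv using hv
  let g : F × (ι → ℤ) →ₗ[ℤ] B := Fintype.linearCombination ℤ v ∘ₗ LinearMap.snd ℤ F (ι → ℤ)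
  have hψκ : ψ ∘ₗ κ = i.toIntLinearMap ∘ₗ Fintype.linearCombination ℤ u :=
    (Pi.basisFun ℤ ι).ext fun j => by simp [hu]
  have hgκ : g ∘ₗ κ = f.toIntLinearMap ∘ₗ Fintype.linearCombination ℤ u :=
    (Pi.basisFun ℤ ι).ext fun j => by
      simp [g, κ, ← hv, Fintype.linearCombination_apply, Pi.single_apply]
  refine AddMonoidHom.exists_comp_eq_of_lift i π hexact.ge ψ.toAddMonoidHom
    (by simpa [AddMonoidHom.coe_comp, Function.comp_def, hπψ] using hθ) f g.toAddMonoidHom ?_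
  intro p a hpa
  obtain ⟨z, rfl⟩ := (hθ_eq_zero_iff p).mp <| by
    rw [← hπψ, ← AddMonoidHom.mem_ker, ← hexact]
    exact ⟨a, hpa.symm⟩
  obtain rfl : Fintype.linearCombination ℤ u z = a :=
    hi ((LinearMap.congr_fun hψκ z).symm.trans hpa)
  exact LinearMap.congr_fun hgκ z

/-- Let `G` be a finitely generated abelian group, `R` a commutative ring, and
`δ ∈ Ext¹(G, R^×)` a class, represented by an extension
`0 → R^× → E → G → 0` (given by an injection `i` and a surjection `π` with
`im i = ker π`).  Then there exist units `u₁,…,u_l ∈ R^×` and integers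
`a₁,…,a_l ≥ 2` with `a₁⋯a_l` the order of the torsion subgroup of `G`, such that
for any ring homomorphism `f : R → S`, if each `f(uⱼ)` has an `aⱼ`-th root in
`S^×`, then the image of `δ` in `Ext¹(G, S^×)` vanishes — i.e. the map
`R^× → S^×` extends to a homomorphism `E → S^×`, so the pushed-out extension
splits. -/
theorem ext_class_killed_by_roots
    (G : Type*) [AddCommGroup G] [AddGroup.FG G]
    (R : Type*) [CommRing R]
    (E : Type*) [AddCommGroup E]
    (i : Additive Rˣ →+ E) (π : E →+ G)
    (hi : Function.Injective i) (hπ : Function.Surjective π)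
    (hexact : i.range = π.ker) :
    ∃ (l : ℕ) (u : Fin l → Rˣ) (a : Fin l → ℕ),
      (∀ j, 2 ≤ a j) ∧
      ((∏ j, a j) = Nat.card (AddCommGroup.torsion G)) ∧
      (∀ (S : Type*) [CommRing S] (f : R →+* S),
        (∀ j, ∃ v : Sˣ, v ^ (a j) = Units.map f.toMonoidHom (u j)) →
        ∃ ρ : E →+ Additive Sˣ,
          ρ.comp i = (MonoidHom.toAdditive (Units.map f.toMonoidHom))) := by
  obtain ⟨n, l, a, ha, ⟨φ⟩⟩ := AddCommGroup.exists_addEquiv_free_prod_pi_zmod G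
  have : ∀ j, NeZero (a j) := fun j => ⟨by have := ha j; omega⟩
  obtain ⟨u, hu⟩ := exists_forall_exists_comp_eq_of_nsmul_eq i π hi hπ hexact a φ
  refine ⟨l, fun j => Additive.toMul (u j), a, ha, ?_, fun S _ f hroots => hu _ _ fun j => ?_⟩
  · rw [AddCommGroup.card_torsion_eq_of_addEquiv_prod isAddTorsion_of_finite φ, Nat.card_pi]
    simp only [Nat.card_zmod]
  · obtain ⟨v, hv⟩ := hroots j
    exact ⟨Additive.ofMul v, congrArg Additive.ofMul hv⟩
end

section
/- Let (A, m) be a local ring, a ∈ m, and R = A[X₁,…,X_l]/(X₁⋯X_l − a). If α ∈ A is a regular element of A, then (the image of) α is a regular element of R. -/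
/-! The element `α` is regular in `A[X]`, and `f = X₁⋯X_l - a` is regular modulo `α`: its image in
`(A ⧸ (α))[X]` is monic for the lexicographic order, and monic polynomials are nonzerodivisors over
any commutative ring. In a commutative ring a regular sequence `x, y` of length two can be swapped,
so `α` is regular modulo `f`. -/

open MvPolynomial

theorem Ideal.Quotient.isRegular_mk_iff {R : Type*} [CommRing R] {I : Ideal R} {x : R} :
    IsRegular (mk I x) ↔ ∀ r, x * r ∈ I → r ∈ I := by
  rw [Commute.isRegular_iff fun _ ↦ Commute.all _ _, isLeftRegular_iff_right_eq_zero_of_mul]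
  refine ⟨fun h r hr ↦ ?_, fun h r hr ↦ ?_⟩
  · rw [← eq_zero_iff_mem] at hr ⊢
    exact h _ (by rwa [map_mul] at hr)
  · obtain ⟨r, rfl⟩ := mk_surjective r
    rw [← map_mul, eq_zero_iff_mem] at hr
    exact eq_zero_iff_mem.mpr (h r hr)

theorem IsRegular.isRegular_mk_span_singleton_swap {R : Type*} [CommRing R] {x y : R}
    (hx : IsRegular x) (hy : IsRegular (Ideal.Quotient.mk (Ideal.span {x}) y)) :
    IsRegular (Ideal.Quotient.mk (Ideal.span {y}) x) := by
  rw [Ideal.Quotient.isRegular_mk_iff] at hy ⊢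
  simp only [Ideal.mem_span_singleton] at hy ⊢
  rintro r ⟨s, hs⟩
  obtain ⟨t, rfl⟩ := hy s ⟨r, hs.symm⟩
  exact ⟨t, hx.left (show x * r = x * (y * t) by rw [hs]; ring)⟩

namespace MonomialOrder

variable {σ R : Type*} [CommRing R] {m : MonomialOrder σ} {f : MvPolynomial σ R}

theorem Monic.isRegular (hf : m.Monic f) : IsRegular f :=
  isRegular_iff_mem_nonZeroDivisors.mpr <|
    m.mem_nonZeroDivisors_of_leadingCoeff_mem_nonZeroDivisors <| hf.leadingCoeff_eq_one ▸ one_mem _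

theorem Monic.sub_C (hf : m.Monic f) (hdeg : m.degree f ≠ 0) (r : R) : m.Monic (f - C r) := by
  rw [sub_eq_add_neg, ← map_neg]
  refine hf.add_of_lt ?_
  simpa [degree_C, ← not_le, ← eq_zero_iff] using hdeg

theorem monic_prod_X_sub_C {s : Finset σ} (hs : s.Nonempty) (r : R) :
    m.Monic (∏ i ∈ s, X i - C r) := by
  nontriviality R
  refine (Monic.prod fun i _ ↦ (monic_X : m.Monic (X i : MvPolynomial σ R))).sub_C ?_ r
  rw [degree_prod_of_regular fun i _ ↦ by rw [monic_X.leadingCoeff_eq_one]; exact isRegular_one]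
  simpa [Finset.sum_eq_zero_iff, degree_X] using hs.exists_mem

end MonomialOrder

theorem MvPolynomial.isRegular_mk_map_C_of_isRegular_map {σ R : Type*} [CommRing R]
    {I : Ideal R} {f : MvPolynomial σ R} (hf : IsRegular (map (Ideal.Quotient.mk I) f)) :
    IsRegular (Ideal.Quotient.mk (I.map C) f) := by
  rw [Ideal.Quotient.isRegular_mk_iff, ← Ideal.mk_ker (I := I), ← ker_map]
  intro g hg
  rw [RingHom.mem_ker, map_mul] at *
  exact hf.left (hg.trans (mul_zero _).symm)

theorem regular_element_stays_regular_general
    (A : Type*) [CommRing A]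
    (l : ℕ) (hl : 1 ≤ l)
    (a : A)
    (α : A) (hα : IsRegular α) :
    IsRegular
      (Ideal.Quotient.mk
        (Ideal.span {(∏ i, (X i : MvPolynomial (Fin l) A)) - C a})
        (C α)) := by
  refine (hα.monomial (m := 0)).isRegular_mk_span_singleton_swap ?_
  rw [← C_apply, ← Set.image_singleton, ← Ideal.map_span]
  apply isRegular_mk_map_C_of_isRegular_map
  have hmonic := MonomialOrder.monic_prod_X_sub_C (m := MonomialOrder.lex)
    (Finset.univ_nonempty_iff.mpr ⟨(⟨0, hl⟩ : Fin l)⟩) (Ideal.Quotient.mk (Ideal.span {α}) a)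
  simpa [map_prod] using hmonic.isRegular

/-- Let `(A, m)` be a (noetherian) local ring, `a ∈ m`, and
`R = A[X₁,…,X_l]/(X₁⋯X_l − a)`.  If `α` is a regular element of `A`, then the image
of `α` in `R` is a regular element of `R`. -/
theorem regular_element_stays_regular
    (A : Type*) [CommRing A] [IsLocalRing A] [IsNoetherianRing A]
    (l : ℕ) (hl : 1 ≤ l)
    (a : A) (ha : a ∈ IsLocalRing.maximalIdeal A)
    (α : A) (hα : IsRegular α) :
    IsRegular
      (Ideal.Quotient.mk
        (Ideal.span {(∏ i, (X i : MvPolynomial (Fin l) A)) - C a})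
        (C α)) :=
  regular_element_stays_regular_general A l hl a α hα
end

section
/- Let α : M → (A, ×) be a pre-log monoid over a ring A (a monoid homomorphism into the multiplicative monoid of A). Then the map α′ : M ⊞_{α⁻¹(A^×)} A^× → A given by α′([m, a]) = α(m)·a is a well-defined monoid homomorphism, and α′ restricts to an isomorphism (α′)⁻¹(A^×) ≅ A^×, i.e., the pushout-type monoid M ⊞_{α⁻¹(A^×)} A^× is a log monoid over A. -/
/-- Let `α : M → (A, ×)` be a pre-log monoid over a ring `A`.  Then
`α′([m, a]) = α(m)·a` is a well-defined multiplicative map on the pushout-type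
monoid `M ⊞_{α⁻¹(A^×)} A^×`, and `α′` restricts to a bijection
`(α′)⁻¹(A^×) ≅ A^×`; i.e. the associated monoid is a log monoid over `A`. -/
theorem associated_log_monoid
    (A : Type*) [CommRing A] (M : Type*) [CommMonoid M] (α : M →* A) :
    ∃ α' : Quot (pushoutRel (Subtype.val : {m : M // IsUnit (α m)} → M)
        (fun m : {m : M // IsUnit (α m)} => m.2.unit : {m : M // IsUnit (α m)} → Aˣ)) → A,
      (∀ (m : M) (a : Aˣ), α' (Quot.mk _ (m, a)) = α m * ↑a) ∧
      (∀ x y : M × Aˣ,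
        α' (Quot.mk _ (x * y)) = α' (Quot.mk _ x) * α' (Quot.mk _ y)) ∧
      Set.BijOn α' {x | IsUnit (α' x)} {a : A | IsUnit a} := by
  have hwd : ∀ x y : M × Aˣ, pushoutRel (Subtype.val : {m : M // IsUnit (α m)} → M)
      (fun m : {m : M // IsUnit (α m)} => m.2.unit) x y →
      α x.1 * (x.2 : A) = α y.1 * (y.2 : A) := by
    rintro ⟨m, a⟩ ⟨m', a'⟩ ⟨q, q', h1, h2⟩
    have h1' : α m * α q.1 = α m' * α q'.1 := by
      rw [← map_mul, ← map_mul, h1]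
    have h2' : (a : A) * α q'.1 = (a' : A) * α q.1 := by
      have := congrArg (Units.val) h2
      simpa [q.2.unit_spec, q'.2.unit_spec] using this
    have hu : IsUnit (α q.1 * α q'.1) := q.2.mul q'.2
    refine hu.mul_right_cancel ?_
    calc α m * (a : A) * (α q.1 * α q'.1)
        = (α m * α q.1) * ((a : A) * α q'.1) := by ring
      _ = (α m' * α q'.1) * ((a' : A) * α q.1) := by rw [h1', h2']
      _ = α m' * (a' : A) * (α q.1 * α q'.1) := by ring
  refine ⟨Quot.lift (fun x : M × Aˣ => α x.1 * (x.2 : A)) hwd, fun m a => rfl, ?_, ?_, ?_, ?_⟩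
  · intro x y
    simp [map_mul, Units.val_mul]; ring
  · intro x _; exact Set.mem_setOf.mpr (by assumption)
  · -- InjOn
    intro x hx y hy hxy
    induction x using Quot.ind with | _ x =>
    induction y using Quot.ind with | _ y =>
    obtain ⟨m, a⟩ := x
    obtain ⟨m', a'⟩ := y
    have hm : IsUnit (α m) := by
      have : IsUnit (α m * (a : A)) := hx
      exact isUnit_of_mul_isUnit_left this
    have hm' : IsUnit (α m') := by
      have : IsUnit (α m' * (a' : A)) := hy
      exact isUnit_of_mul_isUnit_left this
    have key : ∀ (n : M) (hn : IsUnit (α n)) (b : Aˣ),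
        Quot.mk (pushoutRel (Subtype.val : {m : M // IsUnit (α m)} → M)
          (fun m : {m : M // IsUnit (α m)} => m.2.unit)) (n, b) =
        Quot.mk _ (1, hn.unit * b) := by
      intro n hn b
      apply Quot.sound
      refine ⟨⟨1, by simp⟩, ⟨n, hn⟩, by simp, ?_⟩
      apply Units.ext
      simp [hn.unit_spec, mul_comm]
    rw [key m hm a, key m' hm' a']
    congr 1
    have : (hm.unit * a : Aˣ) = hm'.unit * a' := by
      apply Units.ext
      simpa [hm.unit_spec, hm'.unit_spec] using hxy
    rw [this]
  · -- surjOn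
    rintro a ha
    exact ⟨Quot.mk _ (1, ha.unit), by simpa using ha, by simp [ha.unit_spec]⟩
end

section
/- Let f : A → B be a faithfully flat ring homomorphism, and let α : M → (A, ×) be a log monoid over A with M integral (cancellative). Consider the base-change log monoids M ⊞_{A^×} B^× (via f, which is quasi-local) and M ⊞ (B ⊗_A B)^×. Then the sequence 0 → M → M ⊞_A B ⇉ M ⊞_A (B ⊗_A B), with the first map m ↦ [m, 1] and the two maps induced by b ↦ b⊗1 and b ↦ 1⊗b, is exact: the first map is injective, and its image equals the equalizer of the two maps. -/
open scoped TensorProduct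

/-- The relation defining the base-changed log monoid `M ⊞_A B`
(`= M ⊞_{(g∘α)⁻¹(B^×)} B^×` for `g : A → B`). -/
def logRel (A : Type*) [CommRing A] {M : Type*} [CommMonoid M] (α : M →* A)
    (B : Type*) [CommRing B] [Algebra A B] :
    M × Bˣ → M × Bˣ → Prop :=
  pushoutRel (Subtype.val : {m : M // IsUnit (algebraMap A B (α m))} → M)
    (fun m => m.2.unit)

open TensorProduct

section Aux
variable (A B : Type*) [CommRing A] [CommRing B] [Algebra A B] [Module.FaithfullyFlat A B]

lemma aux_mk_injective (M : Type*) [AddCommGroup M] [Module A M] :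
    Function.Injective (TensorProduct.mk A B M 1) := by
  set φ : M →ₗ[A] B ⊗[A] M := TensorProduct.mk A B M 1
  -- retraction of lTensor B φ
  set r : B ⊗[A] (B ⊗[A] M) →ₗ[A] B ⊗[A] M :=
    (LinearMap.rTensor M (LinearMap.mul' A B)).comp
      (TensorProduct.assoc A B B M).symm.toLinearMap with hr_def
  have hretr : ∀ x, r (LinearMap.lTensor B φ x) = x := by
    intro x
    induction x using TensorProduct.induction_on with
    | zero => simp
    | tmul b m => simp [hr_def, φ, TensorProduct.mk]
    | add x y hx hy => simp [map_add, hx, hy]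
  have hinj : Function.Injective (LinearMap.lTensor B φ) := by
    intro x y h
    have := congrArg r h
    rwa [hretr, hretr] at this
  have hker : ∀ x : B ⊗[A] (LinearMap.ker φ),
      LinearMap.lTensor B (LinearMap.ker φ).subtype x = 0 := by
    intro x
    apply hinj
    rw [map_zero, ← LinearMap.comp_apply, ← LinearMap.lTensor_comp]
    have : φ.comp (LinearMap.ker φ).subtype = 0 := by
      ext ⟨y, hy⟩; exact hy
    rw [this]
    simp
  have hsub : Subsingleton (B ⊗[A] (LinearMap.ker φ)) := by
    constructor
    intro x y
    have : Function.Injective (LinearMap.lTensor B (LinearMap.ker φ).subtype) :=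
      Module.Flat.lTensor_preserves_injective_linearMap _ (Submodule.injective_subtype _)
    exact this ((hker x).trans (hker y).symm)
  have : Subsingleton (LinearMap.ker φ) :=
    Module.FaithfullyFlat.lTensor_reflects_triviality A B _
  rw [← LinearMap.ker_eq_bot]
  exact Submodule.eq_bot_of_subsingleton

lemma aux_algebraMap_injective : Function.Injective (algebraMap A B) := by
  intro a a' h
  apply aux_mk_injective A B A
  have key : ∀ x : A, TensorProduct.mk A B A 1 x = algebraMap A B x ⊗ₜ[A] (1 : A) := by
    intro x
    show (1 : B) ⊗ₜ[A] x = _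
    rw [Algebra.algebraMap_eq_smul_one, TensorProduct.smul_tmul, smul_eq_mul, mul_one]
  rw [key, key, h]

lemma aux_quasiLocal {a : A} (h : IsUnit (algebraMap A B a)) : IsUnit a := by
  by_contra hu
  have hI : Ideal.span {a} ≠ ⊤ := by
    rwa [Ne, Ideal.span_singleton_eq_top]
  have hff := (Module.FaithfullyFlat.iff_flat_and_proper_ideal A B).mp inferInstance
  apply hff.2 _ hI
  have h1 : (1 : B) ∈ Ideal.span {a} • (⊤ : Submodule A B) := by
    have : (1 : B) = a • (↑h.unit⁻¹ : B) := by
      rw [Algebra.smul_def]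
      exact (Units.mul_inv h.unit).symm
    rw [this]
    exact Submodule.smul_mem_smul (Ideal.mem_span_singleton_self a) trivial
  rw [eq_top_iff]
  intro b _
  have : b = b * 1 := (mul_one b).symm
  rw [this]
  refine Submodule.smul_induction_on h1 (fun r hr x _ => ?_) (fun x y hx hy => ?_)
  · have : b * (r • x) = r • (b * x) := by rw [Algebra.smul_def, Algebra.smul_def]; ring
    rw [this]
    exact Submodule.smul_mem_smul hr trivial
  · rw [mul_add]; exact Submodule.add_mem _ hx hy

lemma aux_descend {b : B} (h : b ⊗ₜ[A] (1 : B) = (1 : B) ⊗ₜ[A] b) :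
    ∃ a : A, algebraMap A B a = b := by
  set N : Submodule A B := LinearMap.range (Algebra.linearMap A B) with hN
  have hπ : N.mkQ b = 0 := by
    apply aux_mk_injective A B (B ⧸ N)
    have h1 : TensorProduct.mk A B (B ⧸ N) 1 (N.mkQ b) = LinearMap.lTensor B N.mkQ ((1:B) ⊗ₜ[A] b) := by
      simp
    rw [h1, ← h, map_zero]
    have : N.mkQ (1 : B) = 0 := by
      rw [Submodule.mkQ_apply, Submodule.Quotient.mk_eq_zero]
      exact ⟨1, by simp⟩
    simp [this]
  rw [Submodule.mkQ_apply, Submodule.Quotient.mk_eq_zero] at hπ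
  exact hπ

end Aux

lemma logRel_equivalence (A : Type*) [CommRing A] {M : Type*} [CommMonoid M] (α : M →* A)
    (C : Type*) [CommRing C] [Algebra A C] : Equivalence (logRel A α C) := by
  constructor
  · intro x
    exact ⟨⟨1, by simp⟩, ⟨1, by simp⟩, rfl, rfl⟩
  · rintro x y ⟨q, q', h1, h2⟩
    exact ⟨q', q, h1.symm, h2.symm⟩
  · rintro x y z ⟨q, q', h1, h2⟩ ⟨p, p', h3, h4⟩
    refine ⟨⟨q.1 * p.1, by simpa [map_mul] using q.2.mul p.2⟩,
            ⟨q'.1 * p'.1, by simpa [map_mul] using q'.2.mul p'.2⟩, ?_, ?_⟩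
    · show x.1 * (q.1 * p.1) = z.1 * (q'.1 * p'.1)
      calc x.1 * (q.1 * p.1) = (x.1 * q.1) * p.1 := by rw [mul_assoc]
        _ = (y.1 * q'.1) * p.1 := by rw [h1]
        _ = (y.1 * p.1) * q'.1 := by rw [mul_right_comm]
        _ = (z.1 * p'.1) * q'.1 := by rw [h3]
        _ = z.1 * (q'.1 * p'.1) := by rw [mul_assoc, mul_comm p'.1]
    · apply Units.ext
      have H2 : (x.2 : C) * algebraMap A C (α q'.1) = (y.2 : C) * algebraMap A C (α q.1) := by
        have := congrArg (Units.val) h2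
        simpa using this
      have H4 : (y.2 : C) * algebraMap A C (α p'.1) = (z.2 : C) * algebraMap A C (α p.1) := by
        have := congrArg (Units.val) h4
        simpa using this
      show (x.2 : C) * _ = (z.2 : C) * _
      rw [IsUnit.unit_spec, IsUnit.unit_spec]
      show (x.2 : C) * algebraMap A C (α (q'.1 * p'.1)) = (z.2 : C) * algebraMap A C (α (q.1 * p.1))
      rw [map_mul, map_mul, map_mul, map_mul]
      calc (x.2 : C) * (algebraMap A C (α q'.1) * algebraMap A C (α p'.1))
          = ((x.2 : C) * algebraMap A C (α q'.1)) * algebraMap A C (α p'.1) := by ring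
        _ = ((y.2 : C) * algebraMap A C (α p'.1)) * algebraMap A C (α q.1) := by rw [H2]; ring
        _ = ((z.2 : C) * algebraMap A C (α p.1)) * algebraMap A C (α q.1) := by rw [H4]
        _ = (z.2 : C) * (algebraMap A C (α q.1) * algebraMap A C (α p.1)) := by ring

lemma logRel_of_quot_eq {A : Type*} [CommRing A] {M : Type*} [CommMonoid M] {α : M →* A}
    {C : Type*} [CommRing C] [Algebra A C] {x y : M × Cˣ}
    (h : Quot.mk (logRel A α C) x = Quot.mk (logRel A α C) y) : logRel A α C x y :=
  ((logRel_equivalence A α C).eqvGen_iff).mp (Quot.eq.mp h)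

/-- Descent lemma for log monoids: if `A → B` is faithfully flat and
`α : M → (A, ×)` is a log monoid over `A` with `M` integral, then
`0 → M → M ⊞_A B ⇉ M ⊞_A (B ⊗_A B)` is exact: the map `m ↦ [m, 1]` is injective,
its image is contained in, and equals, the equalizer of the two maps induced by
`b ↦ b ⊗ 1` and `b ↦ 1 ⊗ b`. -/
theorem log_monoid_descent
    (A B : Type*) [CommRing A] [CommRing B] [Algebra A B]
    [Module.FaithfullyFlat A B]
    (M : Type*) [CancelCommMonoid M] (α : M →* A)
    (hlog : ∀ a : Aˣ, ∃! m : M, α m = ↑a) :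
    (∀ m m' : M,
      Quot.mk (logRel A α B) (m, (1 : Bˣ)) = Quot.mk (logRel A α B) (m', (1 : Bˣ)) →
      m = m') ∧
    (∀ m : M,
      Quot.mk (logRel A α (B ⊗[A] B))
        (m, Units.map (Algebra.TensorProduct.includeLeft :
            B →ₐ[A] B ⊗[A] B).toRingHom.toMonoidHom (1 : Bˣ)) =
      Quot.mk (logRel A α (B ⊗[A] B))
        (m, Units.map (Algebra.TensorProduct.includeRight :
            B →ₐ[A] B ⊗[A] B).toRingHom.toMonoidHom (1 : Bˣ))) ∧
    (∀ x : M × Bˣ,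
      Quot.mk (logRel A α (B ⊗[A] B))
        (x.1, Units.map (Algebra.TensorProduct.includeLeft :
            B →ₐ[A] B ⊗[A] B).toRingHom.toMonoidHom x.2) =
      Quot.mk (logRel A α (B ⊗[A] B))
        (x.1, Units.map (Algebra.TensorProduct.includeRight :
            B →ₐ[A] B ⊗[A] B).toRingHom.toMonoidHom x.2) →
      ∃ m : M, Quot.mk (logRel A α B) x = Quot.mk (logRel A α B) (m, (1 : Bˣ))) := by
  refine ⟨?_, ?_, ?_⟩
  · -- injectivity
    intro m m' h
    obtain ⟨q, q', h1, h2⟩ := logRel_of_quot_eq h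
    have hcoe : algebraMap A B (α q'.1) = algebraMap A B (α q.1) := by
      have := congrArg Units.val h2
      simpa using this
    have hAeq : α q'.1 = α q.1 := aux_algebraMap_injective A B hcoe
    have hu : IsUnit (α q.1) := aux_quasiLocal A B q.2
    have hq : q.1 = q'.1 := by
      refine ((hlog hu.unit).unique ?_ ?_).symm
      · exact hAeq.trans hu.unit_spec.symm
      · exact hu.unit_spec.symm ▸ rfl
    rw [← hq] at h1
    exact mul_right_cancel h1
  · -- both maps agree on image of M
    intro m
    simp only [map_one]
  · -- equalizer
    rintro ⟨m, b⟩ h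
    obtain ⟨q, q', h1, h2⟩ := logRel_of_quot_eq h
    have hq : q = q' := Subtype.ext (mul_left_cancel (show m * q.1 = m * q'.1 from h1))
    subst hq
    have hb : (b : B) ⊗ₜ[A] (1 : B) = (1 : B) ⊗ₜ[A] (b : B) := by
      have h2' := mul_right_cancel h2
      have := congrArg Units.val h2'
      simpa using this
    obtain ⟨a, ha⟩ := aux_descend A B hb
    have hua : IsUnit a := aux_quasiLocal A B (ha ▸ b.isUnit)
    obtain ⟨m₀, hm₀, -⟩ := hlog hua.unit
    have hm₀' : α m₀ = a := hm₀.trans hua.unit_spec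
    refine ⟨m * m₀, Quot.sound ⟨⟨m₀, by rw [hm₀', ha]; exact b.isUnit⟩, ⟨1, by simp⟩, ?_, ?_⟩⟩
    · exact (mul_one _).symm
    · apply Units.ext
      show (b : B) * _ = (1 : B) * _
      rw [IsUnit.unit_spec, IsUnit.unit_spec]
      show (b : B) * algebraMap A B (α 1) = 1 * algebraMap A B (α m₀)
      rw [map_one, map_one, hm₀', ha, mul_one, one_mul]
end

section
/- Let (A, tA) be a discrete valuation ring and R = A⟦X₁,…,X_l, Y₁,…,Yₙ⟧/(X₁⋯X_l − u t^a Y^B), where u is a unit of the power series ring, a ≥ 1, and B ∈ ℕⁿ. Denote by x_i, y_j the images of X_i, Y_j. Then (t^a·y^I) = (x₁, t^a y^I) ∩ ⋯ ∩ (x_l, t^a y^I) for any I ∈ ℕⁿ with I ≤ B componentwise. Moreover, for each i, (x_i, t^a y^I) = (x_i, t^a) ∩ ⋂_{j ∈ Supp(I)} (x_i, y_j^{I(j)}) is a primary decomposition with no embedded primes, with √(x_i, t^a) = (x_i, t) and √(x_i, y_j^{I(j)}) = (x_i, y_j). -/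
/-!
Write `S = A⟦X, Y⟧`, `ρ = X₁⋯X_l - u tᵃ Y^B` and `ψᵢ` for the substitution `Xᵢ ↦ 0`. For `g`
not involving `Xᵢ` one has `f ∈ (Xᵢ, g)` iff `g ∣ ψᵢ f`, i.e. `(Xᵢ, g) = ψᵢ⁻¹ (g)`; hence for a
prime `p ∈ {t, Yⱼ}` of `S` the ideal `(Xᵢ, pᵏ)` is primary with radical `(Xᵢ, p)`, and
inclusions between such ideals are divisibilities. Divisibility by the monomial `tᵃ Y^I` is a
condition on each coefficient separately; this gives `(tᵃ Y^I) = (tᵃ) ∩ ⋂ⱼ (Yⱼ^{Iⱼ})` and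
`⋂ᵢ (Xᵢ, tᵃ Y^I) = (X₁⋯X_l, tᵃ Y^I)`, and modulo `ρ` the product `X₁⋯X_l` equals
`u tᵃ Y^B ∈ (tᵃ Y^I)` since `I ≤ B`. All ideals involved contain `ρ`, so everything descends
to `R = S/(ρ)`.
-/

open MvPowerSeries Ideal

theorem Prime.radical_span_singleton_pow {R : Type*} [CommSemiring R] {p : R} (hp : Prime p)
    {k : ℕ} (hk : k ≠ 0) : (span {p ^ k}).radical = span {p} := by
  rw [← span_singleton_pow, radical_pow _ hk,
    ((span_singleton_prime hp.ne_zero).mpr hp).radical]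

theorem Prime.isPrimary_span_singleton_pow {R : Type*} [CommRing R] [IsDomain R] {p : R}
    (hp : Prime p) {k : ℕ} (hk : k ≠ 0) : (span {p ^ k}).IsPrimary := by
  refine isPrimary_iff.mpr ⟨?_, fun {f g} hfg => ?_⟩
  · rw [Ne, span_singleton_eq_top]
    exact fun h => hp.not_isUnit (isUnit_of_dvd_unit (dvd_pow_self p hk) h)
  · rw [hp.radical_span_singleton_pow hk, mem_span_singleton]
    rw [mem_span_singleton] at hfg ⊢
    exact or_iff_not_imp_right.mpr fun hg => hp.pow_dvd_of_dvd_mul_right k hg hfg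

namespace Ideal

variable {S : Type*} [CommRing S] {J K : Ideal S}

theorem IsPrimary.map_quotientMk (hJ : J ≤ K) (hK : K.IsPrimary) :
    (K.map (Quotient.mk J)).IsPrimary := by
  refine isPrimary_iff.mpr ⟨fun htop => hK.ne_top ?_, fun {x y} hxy => ?_⟩
  · rw [← comap_map_mk hJ, htop, comap_top]
  · obtain ⟨a, rfl⟩ := Quotient.mk_surjective x
    obtain ⟨b, rfl⟩ := Quotient.mk_surjective y
    rw [← map_mul, ← mem_comap, comap_map_mk hJ] at hxy
    rw [← map_radical_of_surjective Quotient.mk_surjective (by rwa [mk_ker])]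
    exact ((isPrimary_iff.mp hK).2 hxy).imp (mem_map_of_mem _) (mem_map_of_mem _)

theorem map_span_pair {T : Type*} [CommRing T] (f : S →+* T) (p q : S) :
    (span {p, q}).map f = span {f p, f q} := by
  rw [map_span, Set.image_pair]

theorem map_span_singleton {T : Type*} [CommRing T] (f : S →+* T) (p : S) :
    (span {p}).map f = span {f p} := by
  rw [map_span, Set.image_singleton]

variable {p q p' q' : S}

theorem isPrimary_span_quotientMk_pair (hJ : J ≤ span {p, q}) (h : (span {p, q}).IsPrimary) :
    (span {Quotient.mk J p, Quotient.mk J q}).IsPrimary := by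
  rw [← map_span_pair]
  exact h.map_quotientMk hJ

theorem radical_span_quotientMk_pair (hJ : J ≤ span {p, q})
    (h : (span {p, q}).radical = span {p', q'}) :
    (span {Quotient.mk J p, Quotient.mk J q}).radical =
      span {Quotient.mk J p', Quotient.mk J q'} := by
  rw [← map_span_pair, ← map_span_pair, ← h,
    map_radical_of_surjective Quotient.mk_surjective (by rwa [mk_ker])]

theorem span_quotientMk_pair_le_iff (hJ : J ≤ span {p', q'}) :
    span {Quotient.mk J p, Quotient.mk J q} ≤ span {Quotient.mk J p', Quotient.mk J q'} ↔
      span {p, q} ≤ span {p', q'} := by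
  rw [← map_span_pair, ← map_span_pair, map_le_iff_le_comap, comap_map_mk hJ]

end Ideal

theorem Finsupp.sum_single_le_iff {σ ι : Type*} [Fintype ι] {e : ι → σ}
    (he : e.Injective) {k : ι → ℕ} {m : σ →₀ ℕ} :
    ∑ i, Finsupp.single (e i) (k i) ≤ m ↔ ∀ i, k i ≤ m (e i) := by
  classical
  refine ⟨fun h i => by
    simpa [Finsupp.finsetSum_apply, Finsupp.single_apply, he.eq_iff] using h (e i), fun h v => ?_⟩
  by_cases hv : v ∈ Set.range e
  · obtain ⟨i, rfl⟩ := hv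
    simpa [Finsupp.finsetSum_apply, Finsupp.single_apply, he.eq_iff] using h i
  · have hne : ∀ i, e i ≠ v := fun i h => hv ⟨i, h⟩
    simp [Finsupp.finsetSum_apply, hne]

namespace MvPowerSeries

variable {σ R : Type*}

instance [CommRing R] [IsDomain R] : IsDomain (MvPowerSeries σ R) := NoZeroDivisors.to_isDomain _

section CommSemiring

variable [CommSemiring R]

theorem monomial_dvd_iff {d : σ →₀ ℕ} {r : R} {f : MvPowerSeries σ R} :
    monomial d r ∣ f ↔ ∀ m, r ∣ coeff m f ∧ (¬ d ≤ m → coeff m f = 0) := by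
  classical
  constructor
  · rintro ⟨g, rfl⟩ m
    rw [coeff_monomial_mul]
    split_ifs with h
    · exact ⟨dvd_mul_right _ _, fun h' => absurd h h'⟩
    · exact ⟨dvd_zero _, fun _ => rfl⟩
  · intro h
    obtain ⟨g, hg⟩ : ∃ g : MvPowerSeries σ R, ∀ m, coeff (m + d) f = r * coeff m g :=
      ⟨fun m => (h (m + d)).1.choose, fun m => (h (m + d)).1.choose_spec⟩
    refine ⟨g, ext fun m => ?_⟩
    rw [coeff_monomial_mul]
    split_ifs with hdm
    · rw [← tsub_add_cancel_of_le hdm, hg, add_tsub_cancel_right]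
    · exact (h m).2 hdm

theorem C_dvd_iff {r : R} {f : MvPowerSeries σ R} : C r ∣ f ↔ ∀ m, r ∣ coeff m f := by
  rw [← monomial_zero_eq_C_apply, monomial_dvd_iff]
  simp

theorem C_mul_prod_X_pow_eq_monomial {ι : Type*} (s : Finset ι) (e : ι → σ) (k : ι → ℕ)
    (r : R) : C r * ∏ i ∈ s, X (e i) ^ k i = monomial (∑ i ∈ s, Finsupp.single (e i) (k i)) r := by
  classical
  induction s using Finset.induction with
  | empty => simp
  | insert a s ha ih =>
    rw [Finset.prod_insert ha, Finset.sum_insert ha, mul_left_comm, ih, X_pow_eq,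
      monomial_mul_monomial, one_mul]

theorem C_mul_prod_X_pow_dvd_of_le {ι : Type*} [Fintype ι] (e : ι → σ) (r : R) {k k' : ι → ℕ}
    (h : ∀ i, k i ≤ k' i) : C r * ∏ i, X (e i) ^ k i ∣ C r * ∏ i, X (e i) ^ k' i :=
  mul_dvd_mul_left _ (Finset.prod_dvd_prod_of_dvd _ _ fun i _ => pow_dvd_pow _ (h i))

theorem C_mul_prod_X_pow_dvd_iff {ι : Type*} [Fintype ι] {e : ι → σ} (he : e.Injective)
    {k : ι → ℕ} {r : R} {f : MvPowerSeries σ R} :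
    C r * ∏ i, X (e i) ^ k i ∣ f ↔ C r ∣ f ∧ ∀ i, X (e i) ^ k i ∣ f := by
  simp only [C_mul_prod_X_pow_eq_monomial, monomial_dvd_iff, C_dvd_iff, X_pow_dvd_iff,
    Finsupp.sum_single_le_iff he, not_forall, not_le]
  exact ⟨fun h => ⟨fun m => (h m).1, fun i m hm => (h m).2 ⟨i, hm⟩⟩,
    fun h m => ⟨h.1 m, fun ⟨i, hi⟩ => h.2 i m hi⟩⟩

/-- The substitution `X s ↦ 0` that fixes all other variables. -/
noncomputable def killVar (s : σ) : MvPowerSeries σ R →ₐ[R] MvPowerSeries σ R :=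
  (rename (Function.Embedding.subtype (· ≠ s))).comp
    (killCompl (Function.Embedding.subtype (· ≠ s)))

theorem coeff_killVar [DecidableEq σ] (s : σ) (f : MvPowerSeries σ R) (m : σ →₀ ℕ) :
    coeff m (killVar s f) = if m s = 0 then coeff m f else 0 := by
  set e := Function.Embedding.subtype (· ≠ s)
  split_ifs with hm
  · obtain ⟨m', rfl⟩ : m ∈ Set.range (Finsupp.embDomain e) := by
      rw [Finsupp.mem_range_embDomain_iff]
      intro v hv
      exact ⟨⟨v, fun h => Finsupp.mem_support_iff.mp hv (h ▸ hm)⟩, rfl⟩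
    rw [killVar, AlgHom.comp_apply, coeff_embDomain_rename, coeff_killCompl]
  · refine coeff_rename_eq_zero _ _ ?_
    rintro ⟨m', rfl⟩
    rw [← Finsupp.embDomain_eq_mapDomain] at hm
    exact hm (Finsupp.embDomain_of_notMem_range _ _ _ (by simp))

@[simp]
theorem killVar_X_self (s : σ) : killVar s (X s : MvPowerSeries σ R) = 0 := by
  rw [killVar, AlgHom.comp_apply, killCompl_X_eq_zero (by simp), map_zero]

@[simp]
theorem killVar_X_of_ne {s v : σ} (h : v ≠ s) : killVar s (X v : MvPowerSeries σ R) = X v := by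
  rw [killVar, AlgHom.comp_apply, show v = Function.Embedding.subtype (· ≠ s) ⟨v, h⟩ from rfl,
    killCompl_X, rename_X]

@[simp]
theorem killVar_C (s : σ) (r : R) : killVar s (C r : MvPowerSeries σ R) = C r := by
  simp [killVar]

theorem killVar_monomial {s : σ} {d : σ →₀ ℕ} (hd : d s = 0) (r : R) :
    killVar s (monomial d r) = monomial d r := by
  classical
  ext m
  rw [coeff_killVar, coeff_monomial]
  split_ifs <;> simp_all

end CommSemiring

section CommRing

variable [CommRing R]

theorem mem_span_X_pair_iff {s : σ} {g : MvPowerSeries σ R} (hg : killVar s g = g)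
    {f : MvPowerSeries σ R} : f ∈ span {X s, g} ↔ g ∣ killVar s f := by
  classical
  rw [mem_span_pair]
  constructor
  · rintro ⟨p, q, rfl⟩
    exact ⟨killVar s q, by simp [hg, mul_comm]⟩
  · rintro ⟨q, hq⟩
    obtain ⟨p, hp⟩ : X s ∣ f - killVar s f :=
      X_dvd_iff.mpr fun m hm => by simp [coeff_killVar, hm]
    exact ⟨p, q, by linear_combination -hp - hq⟩

theorem span_X_pair_eq_comap_killVar {s : σ} {g : MvPowerSeries σ R} (hg : killVar s g = g) :
    span {X s, g} = (span {g}).comap (killVar s) := by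
  ext f
  rw [mem_span_X_pair_iff hg, mem_comap, mem_span_singleton]

theorem span_X_pair_le_span_X_pair_iff {s : σ} {g g' : MvPowerSeries σ R}
    (hg : killVar s g = g) (hg' : killVar s g' = g') :
    span {X s, g} ≤ span {X s, g'} ↔ g' ∣ g := by
  refine ⟨fun h => ?_, fun h => ?_⟩
  · simpa [hg, mem_span_X_pair_iff hg'] using h (subset_span (Set.mem_insert_of_mem _ rfl))
  · rw [span_X_pair_eq_comap_killVar hg, span_X_pair_eq_comap_killVar hg']
    exact comap_mono (span_singleton_le_span_singleton.mpr h)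

theorem X_dvd_C_iff {s : σ} {r : R} : X s ∣ (C r : MvPowerSeries σ R) ↔ r = 0 := by
  classical
  rw [X_dvd_iff]
  refine ⟨fun h => by simpa using h 0 rfl, ?_⟩
  rintro rfl m -
  simp

theorem C_dvd_X_iff {s : σ} {r : R} : C r ∣ (X s : MvPowerSeries σ R) ↔ IsUnit r := by
  classical
  rw [C_dvd_iff]
  exact ⟨fun h => isUnit_of_dvd_one (by simpa using h (Finsupp.single s 1)),
    fun h _ => h.dvd⟩

theorem X_dvd_X_iff [Nontrivial R] {s v : σ} : X s ∣ (X v : MvPowerSeries σ R) ↔ s = v := by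
  classical
  refine ⟨fun h => ?_, by rintro rfl; rfl⟩
  by_contra hsv
  simpa [coeff_X] using
    X_dvd_iff.mp h (Finsupp.single v 1) (Finsupp.single_eq_of_ne' (Ne.symm hsv))

theorem prime_X [IsDomain R] (s : σ) : Prime (X s : MvPowerSeries σ R) := by
  have hX : (X s : MvPowerSeries σ R) ≠ 0 := fun h => by
    classical
    simpa using congrArg (coeff (Finsupp.single s 1)) h
  rw [← span_singleton_prime hX, show span {X s} = span {X s, (0 : MvPowerSeries σ R)} by simp,
    span_X_pair_eq_comap_killVar (map_zero _), span_singleton_eq_bot.mpr rfl]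
  exact IsPrime.comap _

theorem prime_C {p : R} (hp : Prime p) : Prime (C p : MvPowerSeries σ R) := by
  have := (span_singleton_prime hp.ne_zero).mpr hp
  have hker : span {C p} = (⊥ : Ideal (MvPowerSeries σ (R ⧸ span {p}))).comap
      (map (Ideal.Quotient.mk (span {p}))) := by
    ext f
    simp [mem_span_singleton, C_dvd_iff, MvPowerSeries.ext_iff, Quotient.eq_zero_iff_mem]
  rw [← span_singleton_prime ((map_ne_zero_iff _ C_injective).mpr hp.ne_zero), hker]
  exact IsPrime.comap _

theorem isPrimary_span_X_pair_pow [IsDomain R] {s : σ} {p : MvPowerSeries σ R} (hp : Prime p)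
    (hps : killVar s p = p) {k : ℕ} (hk : k ≠ 0) : (span {X s, p ^ k}).IsPrimary := by
  rw [span_X_pair_eq_comap_killVar (by rw [map_pow, hps])]
  exact (hp.isPrimary_span_singleton_pow hk).comap _

theorem radical_span_X_pair_pow {s : σ} {p : MvPowerSeries σ R} (hp : Prime p)
    (hps : killVar s p = p) {k : ℕ} (hk : k ≠ 0) :
    (span {X s, p ^ k}).radical = span {X s, p} := by
  rw [span_X_pair_eq_comap_killVar (by rw [map_pow, hps]), ← comap_radical,
    hp.radical_span_singleton_pow hk, span_X_pair_eq_comap_killVar hps]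

theorem span_X_pair_C_mul_prod_X_pow {ι : Type*} [Fintype ι] {s : σ} {e : ι → σ}
    (he : e.Injective) (hs : ∀ i, e i ≠ s) (k : ι → ℕ) (r : R) :
    span {X s, C r * ∏ i, X (e i) ^ k i} =
      span {X s, C r} ⊓ ⨅ i ∈ {i | 0 < k i}, span {X s, X (e i) ^ k i} := by
  have hkill : ∀ i, killVar s (X (e i) ^ k i : MvPowerSeries σ R) = X (e i) ^ k i := by
    simp [hs]
  ext f
  rw [mem_span_X_pair_iff (by simp [hs]), mem_inf, mem_span_X_pair_iff (killVar_C s r),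
    C_mul_prod_X_pow_dvd_iff he]
  simp only [mem_iInf, Set.mem_ofPred_eq, mem_span_X_pair_iff (hkill _)]
  refine and_congr_right fun _ => forall_congr' fun i => ⟨fun h _ => h, fun h => ?_⟩
  rcases (k i).eq_zero_or_pos with hki | hki
  · simp [hki]
  · exact h hki

theorem iInf_span_X_pair_le_span_prod_X_pair {ι : Type*} [Fintype ι] {e : ι → σ}
    (he : e.Injective) {d : σ →₀ ℕ} (hd : ∀ i, d (e i) = 0) (r : R) :
    ⨅ i, span {X (e i), monomial d r} ≤ span {∏ i, X (e i), monomial d r} := by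
  classical
  intro f hf
  have hkill : ∀ i, monomial d r ∣ killVar (e i) f := fun i =>
    (mem_span_X_pair_iff (killVar_monomial (hd i) r)).mp (mem_iInf.mp hf i)
  set P := ∑ i, Finsupp.single (e i) 1
  -- `f₁` collects the terms of `f` divisible by `∏ X (e i)`; every other term misses some
  -- `X (e i)`, so its coefficient is one of `killVar (e i) f`
  let f₁ : MvPowerSeries σ R := fun m => if P ≤ m then coeff m f else 0
  have hf₁ : ∀ m, coeff m f₁ = if P ≤ m then coeff m f else 0 := fun _ => rfl
  obtain ⟨g₁, hg₁⟩ : monomial P 1 ∣ f₁ :=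
    monomial_dvd_iff.mpr fun m => ⟨one_dvd _, fun hm => by rw [hf₁, if_neg hm]⟩
  obtain ⟨g₀, hg₀⟩ : monomial d r ∣ f - f₁ := monomial_dvd_iff.mpr fun m => by
    by_cases hm : P ≤ m
    · simp [hf₁, hm]
    · obtain ⟨i, hi⟩ : ∃ i, m (e i) = 0 := by simpa [P, Finsupp.sum_single_le_iff he] using hm
      simpa [hf₁, hm, coeff_killVar, hi] using monomial_dvd_iff.mp (hkill i) m
  have hP : ∏ i, X (e i) = monomial P (1 : R) := by
    simpa using C_mul_prod_X_pow_eq_monomial Finset.univ e 1 (1 : R)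
  exact mem_span_pair.mpr ⟨g₁, g₀, by rw [hP, mul_comm g₁, ← hg₁, mul_comm g₀, ← hg₀]; ring⟩

end CommRing
end MvPowerSeries

section Relation

open Sum

variable {A ι κ : Type*} [CommRing A] [Fintype ι] [Fintype κ]
  (u : MvPowerSeries (ι ⊕ κ) A) (r : A) (B : κ → ℕ)

noncomputable def monomialRelation : MvPowerSeries (ι ⊕ κ) A :=
  ∏ i, X (inl i) - u * C r * ∏ j, X (inr j) ^ B j

local notation "mk" => Ideal.Quotient.mk (span {monomialRelation u r B})

theorem span_monomialRelation_le {i : ι} {g : MvPowerSeries (ι ⊕ κ) A}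
    (hg : g ∣ C r * ∏ j, X (inr j) ^ B j) :
    span {monomialRelation u r B} ≤ span {X (inl i), g} := by
  obtain ⟨p, hp⟩ : X (inl i) ∣ ∏ i, (X (inl i) : MvPowerSeries (ι ⊕ κ) A) :=
    Finset.dvd_prod_of_mem _ (Finset.mem_univ i)
  obtain ⟨q, hq⟩ := hg
  rw [span_singleton_le_iff_mem, mem_span_pair]
  exact ⟨p, -(u * q), by rw [monomialRelation, hp, mul_assoc, hq]; ring⟩

theorem span_monomialRelation_le_C {i : ι} {p : A} (hp : p ∣ r) :
    span {monomialRelation u r B} ≤ span {X (inl i), C p} :=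
  span_monomialRelation_le u r B ((map_dvd C hp).trans (dvd_mul_right _ _))

theorem span_monomialRelation_le_X_inr_pow {i : ι} {j : κ} {k : ℕ} (hk : k ≤ B j) :
    span {monomialRelation u r B} ≤ span {X (inl i), X (inr j) ^ k} :=
  span_monomialRelation_le u r B ((pow_dvd_pow _ hk).trans
    ((Finset.dvd_prod_of_mem (fun j => X (inr j) ^ B j) (Finset.mem_univ j)).trans
      (dvd_mul_left _ _)))

theorem span_monomialRelation_le_X_inr {i : ι} {j : κ} (hj : B j ≠ 0) :
    span {monomialRelation u r B} ≤ span {X (inl i), X (inr j)} := by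
  simpa using span_monomialRelation_le_X_inr_pow u r B (i := i) (Nat.one_le_iff_ne_zero.mpr hj)

variable {B} {I : κ → ℕ}

theorem span_mk_eq_iInf_span_mk_X_inl_pair (hIB : ∀ j, I j ≤ B j) :
    span {mk (C r * ∏ j, X (inr j) ^ I j)} =
      ⨅ i, span {mk (X (inl i)), mk (C r * ∏ j, X (inr j) ^ I j)} := by
  have hJ (i : ι) := span_monomialRelation_le u r B (i := i) (C_mul_prod_X_pow_dvd_of_le inr r hIB)
  apply comap_injective_of_surjective _ Ideal.Quotient.mk_surjective
  simp only [← map_span_singleton, ← map_span_pair, comap_iInf, comap_map_quotientMk,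
    comap_map_mk (hJ _)]
  refine le_antisymm (sup_le (le_iInf hJ) (le_iInf fun i => span_mono (by simp))) ?_
  have hinf := iInf_span_X_pair_le_span_prod_X_pair (d := ∑ j, Finsupp.single (inr j) (I j))
    (inl_injective : (inl : ι → ι ⊕ κ).Injective) (by simp [Finsupp.finsetSum_apply]) r
  rw [← C_mul_prod_X_pow_eq_monomial] at hinf
  refine hinf.trans (span_le.mpr (Set.insert_subset_iff.mpr ⟨?_, by simp [mem_sup_right]⟩))
  -- modulo the relation, `∏ X (inl i) = u * (C r * ∏ X (inr j) ^ B j)`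
  obtain ⟨q, hq⟩ := C_mul_prod_X_pow_dvd_of_le (R := A) inr r hIB
  exact Submodule.mem_sup.mpr ⟨_, subset_span rfl, _,
    mem_span_singleton.mpr (dvd_mul_right _ (u * q)),
    by rw [monomialRelation, mul_assoc, hq]; ring⟩

theorem span_mk_X_inl_pair_eq_inf (hIB : ∀ j, I j ≤ B j) (i : ι) :
    span {mk (X (inl i)), mk (C r * ∏ j, X (inr j) ^ I j)} =
      span {mk (X (inl i)), mk (C r)} ⊓
        ⨅ j ∈ {j | 0 < I j}, span {mk (X (inl i)), mk (X (inr j) ^ I j)} := by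
  apply comap_injective_of_surjective _ Ideal.Quotient.mk_surjective
  simp only [← map_span_pair, comap_inf, comap_iInf,
    comap_map_mk (span_monomialRelation_le u r B (C_mul_prod_X_pow_dvd_of_le inr r hIB)),
    comap_map_mk (span_monomialRelation_le_C u r B (i := i) dvd_rfl),
    comap_map_mk (span_monomialRelation_le_X_inr_pow u r B (i := i) (hIB _))]
  exact span_X_pair_C_mul_prod_X_pow inr_injective (by simp) I r

end Relation

theorem dvr_powerSeries_primary_decomposition_general
    (A : Type*) [CommRing A] [IsDomain A] [IsDiscreteValuationRing A]
    (t : A) (ht : IsLocalRing.maximalIdeal A = Ideal.span {t})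
    (l n : ℕ)
    (u : (MvPowerSeries (Fin l ⊕ Fin n) A)ˣ)
    (a : ℕ) (ha : 1 ≤ a) (B I : Fin n → ℕ) (hIB : ∀ j, I j ≤ B j) :
    letI J : Ideal (MvPowerSeries (Fin l ⊕ Fin n) A) :=
      Ideal.span {(∏ i : Fin l, X (Sum.inl i)) -
        (u : MvPowerSeries (Fin l ⊕ Fin n) A) * C (σ := Fin l ⊕ Fin n) (R := A) (t ^ a) *
          ∏ j : Fin n, (X (Sum.inr j) : MvPowerSeries (Fin l ⊕ Fin n) A) ^ B j}
    letI mk := Ideal.Quotient.mk J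
    letI x : Fin l → _ := fun i => mk (X (Sum.inl i))
    letI y : Fin n → _ := fun j => mk (X (Sum.inr j))
    letI c := mk (C (σ := Fin l ⊕ Fin n) (R := A) (t ^ a)) * ∏ j : Fin n, y j ^ I j
    (Ideal.span {c} = ⨅ i : Fin l, Ideal.span {x i, c}) ∧
    (∀ i : Fin l,
      (Ideal.span {x i, c} =
        Ideal.span {x i, mk (C (σ := Fin l ⊕ Fin n) (R := A) (t ^ a))} ⊓
          ⨅ j ∈ {j : Fin n | 0 < I j}, Ideal.span {x i, y j ^ I j}) ∧
      (Ideal.span {x i, mk (C (σ := Fin l ⊕ Fin n) (R := A) (t ^ a))}).IsPrimary ∧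
      (∀ j : Fin n, 0 < I j → (Ideal.span {x i, y j ^ I j}).IsPrimary) ∧
      ((Ideal.span {x i, mk (C (σ := Fin l ⊕ Fin n) (R := A) (t ^ a))}).radical =
        Ideal.span {x i, mk (C (σ := Fin l ⊕ Fin n) (R := A) t)}) ∧
      (∀ j : Fin n, 0 < I j →
        (Ideal.span {x i, y j ^ I j}).radical = Ideal.span {x i, y j}) ∧
      -- no embedded primes: the radicals are pairwise incomparable
      (∀ j : Fin n, 0 < I j →
        ¬ Ideal.span {x i, mk (C (σ := Fin l ⊕ Fin n) (R := A) t)} ≤ Ideal.span {x i, y j} ∧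
        ¬ Ideal.span {x i, y j} ≤ Ideal.span {x i, mk (C (σ := Fin l ⊕ Fin n) (R := A) t)}) ∧
      (∀ j j' : Fin n, 0 < I j → 0 < I j' → j ≠ j' →
        ¬ Ideal.span {x i, y j} ≤ Ideal.span {x i, y j'})) := by
  have htp : Prime t := ((IsDiscreteValuationRing.irreducible_iff_uniformizer t).mpr ht).prime
  have ha0 : a ≠ 0 := by omega
  have hB {j} (hj : 0 < I j) : B j ≠ 0 := (hj.trans_le (hIB j)).ne'
  have hkill {i : Fin l} {j : Fin n} :
      killVar (Sum.inl i) (X (Sum.inr j) : MvPowerSeries (Fin l ⊕ Fin n) A) = X (Sum.inr j) :=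
    killVar_X_of_ne (by simp)
  simp only [← map_pow, ← map_prod, ← map_mul]
  refine ⟨span_mk_eq_iInf_span_mk_X_inl_pair _ _ hIB, fun i => ⟨span_mk_X_inl_pair_eq_inf _ _ hIB i,
    ?_, fun j hj => ?_, ?_, fun j hj => ?_, fun j hj => ⟨?_, ?_⟩, fun j j' hj hj' hjj' => ?_⟩⟩
  · exact isPrimary_span_quotientMk_pair (span_monomialRelation_le_C _ _ _ dvd_rfl)
      (by rw [map_pow]; exact isPrimary_span_X_pair_pow (prime_C htp) (killVar_C _ _) ha0)
  · exact isPrimary_span_quotientMk_pair (span_monomialRelation_le_X_inr_pow _ _ _ (hIB j))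
      (isPrimary_span_X_pair_pow (prime_X _) hkill hj.ne')
  · exact radical_span_quotientMk_pair (span_monomialRelation_le_C _ _ _ dvd_rfl)
      (by rw [map_pow]; exact radical_span_X_pair_pow (prime_C htp) (killVar_C _ _) ha0)
  · exact radical_span_quotientMk_pair (span_monomialRelation_le_X_inr_pow _ _ _ (hIB j))
      (radical_span_X_pair_pow (prime_X _) hkill hj.ne')
  · refine (span_quotientMk_pair_le_iff (span_monomialRelation_le_X_inr _ _ _ (hB hj))).not.mpr ?_
    rw [span_X_pair_le_span_X_pair_iff (killVar_C _ _) hkill, X_dvd_C_iff]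
    exact htp.ne_zero
  · refine (span_quotientMk_pair_le_iff
      (span_monomialRelation_le_C _ _ _ (dvd_pow_self t ha0))).not.mpr ?_
    rw [span_X_pair_le_span_X_pair_iff hkill (killVar_C _ _), C_dvd_X_iff]
    exact htp.not_isUnit
  · refine (span_quotientMk_pair_le_iff (span_monomialRelation_le_X_inr _ _ _ (hB hj'))).not.mpr ?_
    rw [span_X_pair_le_span_X_pair_iff hkill hkill, X_dvd_X_iff]
    exact fun h => hjj' (Sum.inr_injective h).symm

/-- Primary decomposition in `R = A⟦X₁,…,X_l, Y₁,…,Yₙ⟧/(X₁⋯X_l − u tᵃ Y^B)` over a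
discrete valuation ring `(A, tA)`:  for `I ≤ B` one has
`(tᵃ y^I) = ⋂ᵢ (xᵢ, tᵃ y^I)`, and for each `i`,
`(xᵢ, tᵃ y^I) = (xᵢ, tᵃ) ∩ ⋂_{j ∈ Supp I} (xᵢ, yⱼ^{I j})` is a primary
decomposition with no embedded primes (the radicals `(xᵢ, t)`, `(xᵢ, yⱼ)` are
pairwise incomparable), with `√(xᵢ, tᵃ) = (xᵢ, t)` and `√(xᵢ, yⱼ^{I j}) = (xᵢ, yⱼ)`. -/
theorem dvr_powerSeries_primary_decomposition
    (A : Type*) [CommRing A] [IsDomain A] [IsDiscreteValuationRing A]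
    (t : A) (ht : IsLocalRing.maximalIdeal A = Ideal.span {t})
    (l n : ℕ) (hl : 1 ≤ l)
    (u : (MvPowerSeries (Fin l ⊕ Fin n) A)ˣ)
    (a : ℕ) (ha : 1 ≤ a) (B I : Fin n → ℕ) (hIB : ∀ j, I j ≤ B j) :
    letI J : Ideal (MvPowerSeries (Fin l ⊕ Fin n) A) :=
      Ideal.span {(∏ i : Fin l, X (Sum.inl i)) -
        (u : MvPowerSeries (Fin l ⊕ Fin n) A) * C (σ := Fin l ⊕ Fin n) (R := A) (t ^ a) *
          ∏ j : Fin n, (X (Sum.inr j) : MvPowerSeries (Fin l ⊕ Fin n) A) ^ B j}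
    letI mk := Ideal.Quotient.mk J
    letI x : Fin l → _ := fun i => mk (X (Sum.inl i))
    letI y : Fin n → _ := fun j => mk (X (Sum.inr j))
    letI c := mk (C (σ := Fin l ⊕ Fin n) (R := A) (t ^ a)) * ∏ j : Fin n, y j ^ I j
    (Ideal.span {c} = ⨅ i : Fin l, Ideal.span {x i, c}) ∧
    (∀ i : Fin l,
      (Ideal.span {x i, c} =
        Ideal.span {x i, mk (C (σ := Fin l ⊕ Fin n) (R := A) (t ^ a))} ⊓
          ⨅ j ∈ {j : Fin n | 0 < I j}, Ideal.span {x i, y j ^ I j}) ∧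
      (Ideal.span {x i, mk (C (σ := Fin l ⊕ Fin n) (R := A) (t ^ a))}).IsPrimary ∧
      (∀ j : Fin n, 0 < I j → (Ideal.span {x i, y j ^ I j}).IsPrimary) ∧
      ((Ideal.span {x i, mk (C (σ := Fin l ⊕ Fin n) (R := A) (t ^ a))}).radical =
        Ideal.span {x i, mk (C (σ := Fin l ⊕ Fin n) (R := A) t)}) ∧
      (∀ j : Fin n, 0 < I j →
        (Ideal.span {x i, y j ^ I j}).radical = Ideal.span {x i, y j}) ∧
      -- no embedded primes: the radicals are pairwise incomparable
      (∀ j : Fin n, 0 < I j →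
        ¬ Ideal.span {x i, mk (C (σ := Fin l ⊕ Fin n) (R := A) t)} ≤ Ideal.span {x i, y j} ∧
        ¬ Ideal.span {x i, y j} ≤ Ideal.span {x i, mk (C (σ := Fin l ⊕ Fin n) (R := A) t)}) ∧
      (∀ j j' : Fin n, 0 < I j → 0 < I j' → j ≠ j' →
        ¬ Ideal.span {x i, y j} ≤ Ideal.span {x i, y j'})) :=
  dvr_powerSeries_primary_decomposition_general A t ht l n u a ha B I hIB
end
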